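/- arXiv:2509.11460 — 4 statements merged into one kernel-verified Lean document; each statement's English description precedes it below -/
import Mathlib

section
/- Let C = (C_1, …, C_g) be a cycle system for a matroid M and let a = (a_1, …, a_g) ∈ ℕ^g. Then a is a coparking function with respect to C if and only if there exists an enumeration i_1, …, i_g of {1,…,g} (a bijection of {1,…,g} with itself) such that for every k ∈ {1,…,g}, a_{i_k} < |C_{i_k} ∩ C_{σ_k}|, where σ_k = {i_k, i_{k+1}, …, i_g} and C_{σ_k} is the unique union of {C_j : j ∈ σ_k}. -/
open Set Matroid

/-- The unique union of the subfamily of `A` indexed by `σ`: the set of elements that lie in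
`A i` for exactly one index `i ∈ σ`. -/
def uniqueUnion {α ι : Type*} (A : ι → Set α) (σ : Finset ι) : Set α :=
  {e | ∃! i, i ∈ σ ∧ e ∈ A i}

namespace Matroid

variable {α : Type*}

/-- A circuit of a matroid: a minimal dependent set. -/
def Circuit (M : Matroid α) (C : Set α) : Prop := Minimal M.Dep C

/-- A cycle of a matroid: a union of circuits. -/
def IsCycle (M : Matroid α) (K : Set α) : Prop :=
  ∃ S : Set (Set α), (∀ C ∈ S, M.Circuit C) ∧ K = ⋃₀ S

/-- The rank of a matroid: the cardinality of a base. -/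
noncomputable def rkNat (M : Matroid α) : ℕ := M.exists_isBase.choose.ncard

/-- A cycle system for `M`: a family of cycles, indexed by a finite type whose cardinality is
the corank `|E| - rank` of `M`, such that the unique union of every nonempty subfamily is
dependent. -/
def IsCycleSystem (M : Matroid α) {ι : Type*} [Fintype ι] (C : ι → Set α) : Prop :=
  Fintype.card ι = M.E.ncard - M.rkNat ∧ (∀ i, M.IsCycle (C i)) ∧
    ∀ σ : Finset ι, σ.Nonempty → M.Dep (uniqueUnion C σ)

/-- Deletion of a set of elements from a matroid. -/
def delete' (M : Matroid α) (D : Set α) : Matroid α := M ↾ (M.E \ D)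

/-- Contraction of a set of elements in a matroid, defined via duality. -/
def contract' (M : Matroid α) (X : Set α) : Matroid α := (M✶.delete' X)✶

end Matroid

/-- A coparking function with respect to a family `C` of sets: a vector `a` of naturals such
that every nonempty index set `σ` contains some `i` with `a i < |C i ∩ uniqueUnion C σ|`. -/
def IsCoparking {α ι : Type*} [Fintype ι] (C : ι → Set α) (a : ι → ℕ) : Prop :=
  ∀ σ : Finset ι, σ.Nonempty → ∃ i ∈ σ, a i < (C i ∩ uniqueUnion C σ).ncard

lemma aux_enum {g : ℕ} (P : Fin g → Finset (Fin g) → Prop)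
    (h : ∀ σ : Finset (Fin g), σ.Nonempty → ∃ i ∈ σ, P i σ) :
    ∃ π : Equiv.Perm (Fin g), ∀ k, P (π k) ((Finset.Ici k).image π) := by
  classical
  choose pick hmem hP using h
  set T : ℕ → Finset (Fin g) := fun n =>
    Nat.rec Finset.univ (fun _ σ => if hs : σ.Nonempty then σ.erase (pick σ hs) else ∅) n
    with hT
  have hTsucc : ∀ n, T (n+1) =
      if hs : (T n).Nonempty then (T n).erase (pick (T n) hs) else ∅ := fun n => rfl
  have hcard : ∀ n, (T n).card = g - n := by
    intro n; induction n with
    | zero => simp [hT]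
    | succ n ih =>
      rw [hTsucc]
      by_cases hs : (T n).Nonempty
      · rw [dif_pos hs, Finset.card_erase_of_mem (hmem _ hs), ih]
        omega
      · rw [dif_neg hs]
        rw [Finset.not_nonempty_iff_eq_empty] at hs
        rw [hs] at ih
        simp only [Finset.card_empty] at ih ⊢
        omega
  have hstep : ∀ n, T (n+1) ⊆ T n := by
    intro n; rw [hTsucc]
    split
    · exact Finset.erase_subset _ _
    · simp
  have hmono : ∀ m n, m ≤ n → T n ⊆ T m := by
    intro m n hmn
    induction hmn with
    | refl => exact Finset.Subset.refl _
    | step h ih => exact Finset.Subset.trans (hstep _) ih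
  have hne : ∀ k : Fin g, (T k).Nonempty := by
    intro k
    rw [← Finset.card_pos, hcard]
    have := k.isLt
    omega
  set f : Fin g → Fin g := fun k => pick (T k) (hne k) with hf
  have hfT : ∀ k : Fin g, f k ∈ T k := fun k => hmem _ _
  have hfnot : ∀ j k : Fin g, (j:ℕ) < k → f k ≠ f j := by
    intro j k hjk hEq
    have h1 : f k ∈ T ((j:ℕ)+1) := hmono ((j:ℕ)+1) (k:ℕ) (by omega) (hfT k)
    rw [hTsucc, dif_pos (hne j)] at h1
    exact (Finset.mem_erase.mp h1).1 hEq
  have hinj : Function.Injective f := by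
    intro j k hjk
    by_contra hne'
    have hv : (j:ℕ) ≠ (k:ℕ) := fun h => hne' (Fin.ext h)
    rcases hv.lt_or_gt with h | h
    · exact hfnot j k h hjk.symm
    · exact hfnot k j h hjk
  let π := Equiv.ofBijective f (Finite.injective_iff_bijective.mp hinj)
  refine ⟨π, ?_⟩
  have himg : ∀ k : Fin g, (Finset.Ici k).image π = T k := by
    intro k
    apply Finset.eq_of_subset_of_card_le
    · intro x hx
      simp only [Finset.mem_image, Finset.mem_Ici] at hx
      obtain ⟨j, hkj, rfl⟩ := hx
      exact hmono _ _ (Fin.le_def.mp hkj) (hfT j)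
    · rw [Finset.card_image_of_injective _ π.injective, hcard, Fin.card_Ici]
  intro k
  rw [himg k]
  exact hP _ (hne k)

/-- `a` is a coparking function for the cycle system `C` iff there is an
enumeration `π` of the indices such that `a (π k) < |C (π k) ∩ uniqueUnion C (π '' [k, g])|`
for every `k`. -/
theorem statement_13 {α : Type*} {g : ℕ} (M : Matroid α) (hE : M.E.Finite)
    (C : Fin g → Set α) (hCS : M.IsCycleSystem C) (a : Fin g → ℕ) :
    IsCoparking C a ↔ ∃ π : Equiv.Perm (Fin g), ∀ k : Fin g,
      a (π k) < (C (π k) ∩ uniqueUnion C ((Finset.Ici k).image π)).ncard := by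
  classical
  constructor
  · intro hcp
    exact aux_enum (fun i σ => a i < (C i ∩ uniqueUnion C σ).ncard) hcp
  · intro ⟨π, hπ⟩ σ hσ
    -- the least k with π k ∈ σ
    have hτ : (σ.image π.symm).Nonempty := hσ.image _
    set k := (σ.image π.symm).min' hτ with hk
    have hkmem : π k ∈ σ := by
      have := (σ.image π.symm).min'_mem hτ
      rw [← hk] at this
      simp only [Finset.mem_image] at this
      obtain ⟨s, hs, hsk⟩ := this
      rwa [← hsk, Equiv.apply_symm_apply]
    refine ⟨π k, hkmem, ?_⟩
    -- σ ⊆ image π (Ici k)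
    have hsub : σ ⊆ (Finset.Ici k).image π := by
      intro s hs
      simp only [Finset.mem_image, Finset.mem_Ici]
      refine ⟨π.symm s, ?_, Equiv.apply_symm_apply _ _⟩
      exact (σ.image π.symm).min'_le _ (Finset.mem_image_of_mem _ hs)
    -- key set inclusion
    have hkey : C (π k) ∩ uniqueUnion C ((Finset.Ici k).image π)
        ⊆ C (π k) ∩ uniqueUnion C σ := by
      rintro e ⟨hei, j, ⟨hjτ, hej⟩, huniq⟩
      have hji : π k = j := huniq (π k) ⟨hsub hkmem, hei⟩
      refine ⟨hei, π k, ⟨hkmem, hei⟩, ?_⟩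
      rintro y ⟨hyσ, hey⟩
      rw [huniq y ⟨hsub hyσ, hey⟩, hji]
    -- finiteness of the ambient set
    have hCE : C (π k) ⊆ M.E := by
      obtain ⟨S, hS, hCeq⟩ := hCS.2.1 (π k)
      rw [hCeq]
      intro x hx
      obtain ⟨D, hD, hxD⟩ := hx
      exact ((hS D hD).prop).subset_ground hxD
    have hfin : (C (π k) ∩ uniqueUnion C σ).Finite :=
      hE.subset (Set.inter_subset_left.trans hCE)
    exact lt_of_lt_of_le (hπ k) (Set.ncard_le_ncard hkey hfin)
end

section
/- Let C = (C_1, …, C_g) be a cycle system for a matroid M on a finite ground set, let P*(C) be the set of coparking functions with respect to C, and let β be the number of coloops of M. Then: (a) P*(C) is downward closed in ℕ^g, i.e., if a ∈ P*(C) and b ∈ ℕ^g satisfies b_i ≤ a_i for all i, then b ∈ P*(C); (b) every a ∈ P*(C) satisfies deg(a) ≤ rank(M) − β; and (c) an element a ∈ P*(C) is maximal in P*(C) under the componentwise order if and only if deg(a) = rank(M) − β. -/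
open Set Matroid

namespace Matroid

variable {α : Type*}

/-- Deletion of a set of elements from a matroid. -/
def deleteElems (M : Matroid α) (D : Set α) : Matroid α := M ↾ (M.E \ D)

/-- Contraction of a set of elements in a matroid, defined via duality. -/
def contractElems (M : Matroid α) (X : Set α) : Matroid α := (M✶.deleteElems X)✶

end Matroid

section Aux

variable {α ι : Type*} [DecidableEq ι]

omit [DecidableEq ι] in
lemma uu_subset (C : ι → Set α) (σ : Finset ι) :
    uniqueUnion C σ ⊆ ⋃ i ∈ σ, C i := by
  rintro e ⟨i, ⟨hi, he⟩, -⟩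
  exact Set.mem_biUnion hi he

lemma uu_inter (C : ι → Set α) {σ : Finset ι} {i : ι} (hi : i ∈ σ) :
    C i ∩ uniqueUnion C σ = C i \ ⋃ j ∈ σ.erase i, C j := by
  ext e
  constructor
  · rintro ⟨heC, j, ⟨hjσ, hej⟩, hun⟩
    have hij : i = j := hun i ⟨hi, heC⟩
    refine ⟨heC, fun hmem => ?_⟩
    obtain ⟨k, hk, hek⟩ := Set.mem_iUnion₂.1 hmem
    have hkj : k = j := hun k ⟨Finset.mem_of_mem_erase hk, hek⟩
    exact (Finset.ne_of_mem_erase hk) (hkj.trans hij.symm)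
  · rintro ⟨heC, hnot⟩
    refine ⟨heC, i, ⟨hi, heC⟩, ?_⟩
    rintro k ⟨hk, hek⟩
    by_contra hne
    exact hnot (Set.mem_biUnion (Finset.mem_erase.2 ⟨hne, hk⟩) hek)

/-- Master lemma: every coparking function (for the subfamily indexed by `σ`) is dominated by a
coparking function `b` with `∑_{i ∈ σ} (b i + 1) = |⋃_{i ∈ σ} C i|`. -/
lemma master (C : ι → Set α) (hfin : ∀ i, (C i).Finite) (a : ι → ℕ) :
    ∀ σ : Finset ι,
      (∀ τ ⊆ σ, τ.Nonempty → ∃ i ∈ τ, a i < (C i ∩ uniqueUnion C τ).ncard) →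
      ∃ b : ι → ℕ, (∀ i, a i ≤ b i) ∧
        (∑ i ∈ σ, (b i + 1)) = (⋃ i ∈ σ, C i).ncard ∧
        (∀ τ ⊆ σ, τ.Nonempty → ∃ i ∈ τ, b i < (C i ∩ uniqueUnion C τ).ncard) := by
  intro σ
  induction σ using Finset.strongInduction with
  | _ σ ih =>
  intro h
  rcases σ.eq_empty_or_nonempty with rfl | hne
  · refine ⟨a, fun _ => le_rfl, by simp, fun τ hτ hτne => ?_⟩
    obtain rfl := Finset.subset_empty.mp hτ
    exact absurd hτne Finset.not_nonempty_empty
  obtain ⟨i, hiσ, hai⟩ := h σ Finset.Subset.rfl hne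
  rw [uu_inter C hiσ] at hai
  set Y : Set α := ⋃ j ∈ σ.erase i, C j with hY
  have hYfin : Y.Finite := (σ.erase i).finite_toSet.biUnion fun j _ => hfin j
  obtain ⟨b', hab', hsum', hcop'⟩ := ih (σ.erase i) (Finset.erase_ssubset hiσ)
    (fun τ hτ hτne => h τ (hτ.trans (Finset.erase_subset i σ)) hτne)
  have hpos : 1 ≤ (C i \ Y).ncard := by omega
  refine ⟨Function.update b' i ((C i \ Y).ncard - 1), ?_, ?_, ?_⟩
  · intro j
    rcases eq_or_ne j i with rfl | hji
    · rw [Function.update_self]; omega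
    · rw [Function.update_of_ne hji]; exact hab' j
  · rw [← Finset.insert_erase hiσ, Finset.sum_insert (Finset.notMem_erase i σ)]
    have hsum2 : ∑ j ∈ σ.erase i, (Function.update b' i ((C i \ Y).ncard - 1) j + 1)
        = ∑ j ∈ σ.erase i, (b' j + 1) := by
      refine Finset.sum_congr rfl fun j hj => ?_
      rw [Function.update_of_ne (Finset.ne_of_mem_erase hj)]
    rw [hsum2, hsum', Function.update_self, Nat.sub_add_cancel hpos]
    have hun : (⋃ j ∈ insert i (σ.erase i), C j) = C i ∪ Y := by
      simp [hY]
    rw [hun, ← Set.diff_union_self,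
      Set.ncard_union_eq Set.disjoint_sdiff_left ((hfin i).diff) hYfin]
  · intro τ hτ hτne
    by_cases hiτ : i ∈ τ
    · refine ⟨i, hiτ, ?_⟩
      rw [Function.update_self, uu_inter C hiτ]
      have hsub : C i \ Y ⊆ C i \ ⋃ j ∈ τ.erase i, C j := by
        refine Set.diff_subset_diff_right ?_
        exact Set.biUnion_subset_biUnion_left (fun j hj =>
          Finset.erase_subset_erase i hτ hj)
      have hle : (C i \ Y).ncard ≤ (C i \ ⋃ j ∈ τ.erase i, C j).ncard :=
        Set.ncard_le_ncard hsub ((hfin i).diff)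
      omega
    · have hτ' : τ ⊆ σ.erase i := fun j hj =>
        Finset.mem_erase.2 ⟨fun hji => hiτ (hji ▸ hj), hτ hj⟩
      obtain ⟨j, hjτ, hbj⟩ := hcop' τ hτ' hτne
      refine ⟨j, hjτ, ?_⟩
      rwa [Function.update_of_ne (fun hji => hiτ (by rw [← hji]; exact hjτ))]

/-- Piercing lemma: a finite set meeting the unique union of every nonempty subfamily of `σ`
has at least `σ.card` elements. -/
lemma pierce (C : ι → Set α) :
    ∀ σ : Finset ι, ∀ T : Set α, T.Finite →
      (∀ τ ⊆ σ, τ.Nonempty → (T ∩ uniqueUnion C τ).Nonempty) → σ.card ≤ T.ncard := by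
  intro σ
  induction σ using Finset.strongInduction with
  | _ σ ih =>
  intro T hT h
  rcases σ.eq_empty_or_nonempty with rfl | hne
  · simp
  obtain ⟨e, heT, he⟩ := h σ Finset.Subset.rfl hne
  obtain ⟨i, ⟨hiσ, hei⟩, hun⟩ := he
  have hcond : ∀ τ ⊆ σ.erase i, τ.Nonempty → ((T \ {e}) ∩ uniqueUnion C τ).Nonempty := by
    intro τ hτ hτne
    obtain ⟨x, hxT, hx⟩ := h τ (hτ.trans (Finset.erase_subset i σ)) hτne
    refine ⟨x, ⟨hxT, fun hxe => ?_⟩, hx⟩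
    obtain rfl : x = e := hxe
    obtain ⟨j, ⟨hjτ, hej⟩, -⟩ := hx
    have hji : j = i := hun j ⟨Finset.mem_of_mem_erase (hτ hjτ), hej⟩
    exact (Finset.ne_of_mem_erase (hτ hjτ)) hji
  have hle := ih (σ.erase i) (Finset.erase_ssubset hiσ) (T \ {e}) hT.diff hcond
  have h1 : (T \ {e}).ncard + 1 = T.ncard := Set.ncard_diff_singleton_add_one heT hT
  have h2 : σ.card = (σ.erase i).card + 1 := (Finset.card_erase_add_one hiσ).symm
  omega

end Aux

section MatroidAux

variable {α : Type*} {g : ℕ}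

lemma cycle_subset_ground {M : Matroid α} {K : Set α} (hK : M.IsCycle K) : K ⊆ M.E := by
  obtain ⟨S, hS, rfl⟩ := hK
  exact Set.sUnion_subset fun D hD => (hS D hD).1.subset_ground

lemma mem_circuit_of_mem_cycle {M : Matroid α} {K : Set α} (hK : M.IsCycle K) {e : α}
    (he : e ∈ K) : ∃ D, M.Circuit D ∧ e ∈ D := by
  obtain ⟨S, hS, rfl⟩ := hK
  obtain ⟨D, hD, heD⟩ := he
  exact ⟨D, hS D hD, heD⟩

/-- Every circuit of `M` is contained in the union of the cycles of a cycle system. -/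
lemma circuit_subset_union (M : Matroid α) (hE : M.E.Finite)
    (C : Fin g → Set α) (hCS : M.IsCycleSystem C) {D : Set α} (hD : M.Circuit D) :
    D ⊆ ⋃ i, C i := by
  have hCsub : ∀ i, C i ⊆ M.E := fun i => cycle_subset_ground (hCS.2.1 i)
  set X : Set α := ⋃ i, C i with hX
  have hXE : X ⊆ M.E := Set.iUnion_subset hCsub
  have hXfin : X.Finite := hE.subset hXE
  intro e heD
  by_contra heX
  have heE : e ∈ M.E := hD.1.subset_ground heD
  -- basis of X
  obtain ⟨I, hI⟩ := M.exists_isBasis X hXE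
  -- piercing gives a lower bound on |X \ I|
  have hg : (Finset.univ : Finset (Fin g)).card ≤ (X \ I).ncard := by
    refine pierce C Finset.univ (X \ I) hXfin.diff fun τ _ hτne => ?_
    have hdep := hCS.2.2 τ hτne
    have hUX : uniqueUnion C τ ⊆ X := (uu_subset C τ).trans
      (Set.iUnion₂_subset fun i _ => Set.subset_iUnion C i)
    have hnsub : ¬ uniqueUnion C τ ⊆ I := fun hsub => hdep.1 (hI.indep.subset hsub)
    obtain ⟨x, hxU, hxI⟩ := Set.not_subset.1 hnsub
    exact ⟨x, ⟨hUX hxU, hxI⟩, hxU⟩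
  -- D \ {e} is independent and e is in its closure
  have hDe : M.Indep (D \ {e}) := by
    by_contra hdep
    have hdep' : M.Dep (D \ {e}) := ⟨hdep, Set.diff_subset.trans hD.1.subset_ground⟩
    have := hD.2 hdep' Set.diff_subset
    exact (this heD).2 rfl
  have heCl : e ∈ M.closure (D \ {e}) := by
    refine hDe.mem_closure_iff.2 (Or.inl ?_)
    rw [Set.insert_diff_singleton, Set.insert_eq_of_mem heD]
    exact hD.1
  -- extend I to a basis J of M.E \ {e}
  have hXsub : X ⊆ M.E \ {e} := fun x hx => ⟨hXE hx, fun hxe => heX (hxe ▸ hx)⟩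
  obtain ⟨J, hJ, hIJ⟩ := hI.indep.subset_isBasis_of_subset (hI.subset.trans hXsub)
    Set.diff_subset
  -- J is a base of M
  have hJbase : M.IsBase J := by
    refine hJ.indep.isBase_of_ground_subset_closure ?_
    intro x hx
    by_cases hxe : x = e
    · have hsub2 : M.closure (D \ {e}) ⊆ M.closure (M.E \ {e}) :=
        M.closure_subset_closure (Set.diff_subset_diff_left hD.1.subset_ground)
      rw [hJ.closure_eq_closure, hxe]
      exact hsub2 heCl
    · rw [hJ.closure_eq_closure]
      exact M.subset_closure (M.E \ {e}) Set.diff_subset ⟨hx, hxe⟩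
  -- J ∩ X = I
  have hJX : I = J ∩ X :=
    hI.eq_of_subset_indep (hJbase.indep.inter_right X)
      (Set.subset_inter hIJ hI.subset) Set.inter_subset_right
  -- counting
  have hJfin : J.Finite := hE.subset hJbase.subset_ground
  have hJcard : (J \ (J ∩ X)).ncard + (J ∩ X).ncard = J.ncard :=
    Set.ncard_diff_add_ncard_of_subset Set.inter_subset_left hJfin
  have hJdiff : J \ (J ∩ X) = J \ X := Set.diff_self_inter
  have hJr : J.ncard = M.rkNat :=
    (hJbase.ncard_eq_ncard_of_isBase M.exists_isBase.choose_spec)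
  have hXI : (X \ I).ncard + I.ncard = X.ncard :=
    Set.ncard_diff_add_ncard_of_subset hI.subset hXfin
  have hEX : (M.E \ X).ncard + X.ncard = M.E.ncard :=
    Set.ncard_diff_add_ncard_of_subset hXE hE
  -- insert e (J \ X) ⊆ M.E \ X
  have heJ : e ∉ J \ X := fun h => (hJ.subset h.1).2 rfl
  have hins : insert e (J \ X) ⊆ M.E \ X := by
    rw [Set.insert_subset_iff]
    exact ⟨⟨heE, heX⟩, fun x hx => ⟨hJbase.subset_ground hx.1, hx.2⟩⟩
  have hins2 : (J \ X).ncard + 1 ≤ (M.E \ X).ncard := by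
    rw [← Set.ncard_insert_of_notMem heJ hJfin.diff]
    exact Set.ncard_le_ncard hins hE.diff
  have hrle : M.rkNat ≤ M.E.ncard := by
    rw [← hJr]
    exact Set.ncard_le_ncard hJbase.subset_ground hE
  have hgval : (Finset.univ : Finset (Fin g)).card = M.E.ncard - M.rkNat := by
    rw [Finset.card_univ]; exact hCS.1
  rw [hJdiff] at hJcard
  have hIJX : I.ncard = (J ∩ X).ncard := by rw [hJX]
  omega

lemma coloops_eq (M : Matroid α) (hE : M.E.Finite)
    (C : Fin g → Set α) (hCS : M.IsCycleSystem C) :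
    {e ∈ M.E | ∀ D, M.Circuit D → e ∉ D} = M.E \ ⋃ i, C i := by
  ext e
  constructor
  · rintro ⟨heE, h⟩
    refine ⟨heE, fun heX => ?_⟩
    obtain ⟨i, hi⟩ := Set.mem_iUnion.1 heX
    obtain ⟨D, hD, heD⟩ := mem_circuit_of_mem_cycle (hCS.2.1 i) hi
    exact h D hD heD
  · rintro ⟨heE, heX⟩
    exact ⟨heE, fun D hD heD => heX (circuit_subset_union M hE C hCS hD heD)⟩

end MatroidAux

/-- the set of coparking functions is downward closed, every coparking function
has degree at most `rank M - β` (with `β` the number of coloops), and a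
coparking function is maximal iff its degree equals `rank M - β`. -/
theorem statement_14 {α : Type*} {g : ℕ} (M : Matroid α) (hE : M.E.Finite)
    (C : Fin g → Set α) (hCS : M.IsCycleSystem C)
    (β : ℕ) (hβ : β = {e ∈ M.E | ∀ D, M.Circuit D → e ∉ D}.ncard) :
    (∀ a b : Fin g → ℕ, IsCoparking C a → b ≤ a → IsCoparking C b) ∧
    (∀ a : Fin g → ℕ, IsCoparking C a → ∑ i, a i ≤ M.rkNat - β) ∧
    (∀ a : Fin g → ℕ, IsCoparking C a →
      ((∀ b : Fin g → ℕ, IsCoparking C b → a ≤ b → a = b) ↔ ∑ i, a i = M.rkNat - β)) := by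
  have hCsub : ∀ i, C i ⊆ M.E := fun i => cycle_subset_ground (hCS.2.1 i)
  have hfin : ∀ i, (C i).Finite := fun i => hE.subset (hCsub i)
  set X : Set α := ⋃ i, C i with hX
  have hXE : X ⊆ M.E := Set.iUnion_subset hCsub
  have hXfin : X.Finite := hE.subset hXE
  have hXuniv : (⋃ i ∈ (Finset.univ : Finset (Fin g)), C i) = X := by
    simp [hX]
  have hβ' : β = (M.E \ X).ncard := by rw [hβ, coloops_eq M hE C hCS]
  have hEX : (M.E \ X).ncard + X.ncard = M.E.ncard :=
    Set.ncard_diff_add_ncard_of_subset hXE hE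
  have hrle : M.rkNat ≤ M.E.ncard := by
    have hB := M.exists_isBase.choose_spec
    exact Set.ncard_le_ncard hB.subset_ground hE
  have hgval : (Finset.univ : Finset (Fin g)).card = M.E.ncard - M.rkNat := by
    rw [Finset.card_univ]; exact hCS.1
  -- the key construction: extend any coparking function to a maximal one of full degree
  have hkey : ∀ a : Fin g → ℕ, IsCoparking C a →
      ∃ b : Fin g → ℕ, (∀ i, a i ≤ b i) ∧ IsCoparking C b ∧ ∑ i, b i = M.rkNat - β := by
    intro a ha
    obtain ⟨b, hab, hsum, hcop⟩ := master C hfin a Finset.univ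
      (fun τ _ hτne => ha τ hτne)
    refine ⟨b, hab, fun σ hσ => hcop σ (Finset.subset_univ σ) hσ, ?_⟩
    rw [Finset.sum_add_distrib, Finset.sum_const, smul_eq_mul, mul_one, hXuniv] at hsum
    omega
  have hb2 : ∀ a : Fin g → ℕ, IsCoparking C a → ∑ i, a i ≤ M.rkNat - β := by
    intro a ha
    obtain ⟨b, hab, -, hsum⟩ := hkey a ha
    calc ∑ i, a i ≤ ∑ i, b i := Finset.sum_le_sum fun i _ => hab i
      _ = M.rkNat - β := hsum
  refine ⟨?_, hb2, ?_⟩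
  · intro a b ha hba σ hσ
    obtain ⟨i, hi, h⟩ := ha σ hσ
    exact ⟨i, hi, lt_of_le_of_lt (hba i) h⟩
  · intro a ha
    constructor
    · intro hmax
      obtain ⟨b, hab, hbcop, hsum⟩ := hkey a ha
      have : a = b := hmax b hbcop hab
      rw [this]; exact hsum
    · intro hdeg b hb hab
      have h1 : ∑ i, b i ≤ ∑ i, a i := by rw [hdeg]; exact hb2 b hb
      have h2 : ∑ i, a i = ∑ i, b i :=
        le_antisymm (Finset.sum_le_sum fun i _ => hab i) h1
      funext i
      exact (Finset.sum_eq_sum_iff_of_le fun i _ => hab i).1 h2 i (Finset.mem_univ i)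
end

section
/- Let C = (C_1, …, C_g) be a cycle system for a matroid M, let e be a non-loop element of the unique union C_{[g]} with e ∈ C_i, and let C'' = (C_1 ∖ {e}, …, C_g ∖ {e}) be the induced cycle system for M / e. Then for every a = (a_1, …, a_g) ∈ ℕ^g: a is a coparking function for C'' with respect to M / e if and only if (a_1, …, a_{i−1}, a_i + 1, a_{i+1}, …, a_g) is a coparking function for C with respect to M. In particular, the coparking functions b for C with b_i > 0 are exactly those arising this way. -/
open Set Matroid

namespace Matroid

variable {α : Type*}

/-- Deletion of a set of elements from a matroid. -/
def deleteSet (M : Matroid α) (D : Set α) : Matroid α := M ↾ (M.E \ D)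

/-- Contraction of a set of elements in a matroid, defined via duality. -/
def contractSet (M : Matroid α) (X : Set α) : Matroid α := (M✶.deleteSet X)✶

end Matroid

/-- coparking functions for the contracted cycle system `(C_j \ {e})_j`
correspond, by adding `1` to the `i`-th entry, exactly to the coparking functions for `C`
whose `i`-th entry is positive. -/
theorem statement_16 {α : Type*} {g : ℕ} (M : Matroid α) (hE : M.E.Finite)
    (C : Fin g → Set α) (hCS : M.IsCycleSystem C) (e : α) (i : Fin g)
    (he : e ∈ uniqueUnion C Finset.univ) (hei : e ∈ C i) (hloop : ¬ M.Dep {e}) :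
    (∀ a : Fin g → ℕ,
      IsCoparking (fun j => C j \ {e}) a ↔
        IsCoparking C (Function.update a i (a i + 1))) ∧
    ({b : Fin g → ℕ | IsCoparking C b ∧ 0 < b i} =
      (fun a : Fin g → ℕ => Function.update a i (a i + 1)) ''
        {a | IsCoparking (fun j => C j \ {e}) a}) := by
  obtain ⟨-, hcyc, -⟩ := hCS
  obtain ⟨j0, ⟨-, hj0e⟩, hj0u⟩ := he
  have huniq : ∀ j, e ∈ C j → j = i := by
    intro j hj
    rw [hj0u j ⟨Finset.mem_univ j, hj⟩, ← hj0u i ⟨Finset.mem_univ i, hei⟩]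
  have hfin : ∀ j, (C j).Finite := by
    intro j
    obtain ⟨S, hS, hSeq⟩ := hcyc j
    rw [hSeq]
    exact hE.subset (Set.sUnion_subset fun t ht => (hS t ht).prop.subset_ground)
  have heUU : ∀ σ : Finset (Fin g), i ∈ σ → e ∈ uniqueUnion C σ :=
    fun σ hiσ => ⟨i, ⟨hiσ, hei⟩, fun j hj => huniq j hj.2⟩
  have hUU : ∀ σ : Finset (Fin g),
      uniqueUnion (fun k => C k \ {e}) σ = uniqueUnion C σ \ {e} := by
    intro σ
    ext x
    by_cases hx : x = e
    · subst hx
      simp [uniqueUnion, ExistsUnique]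
    · simp only [uniqueUnion, Set.mem_setOf_eq, Set.mem_diff, Set.mem_singleton_iff, hx,
        not_false_iff, and_true]
  have hne : ∀ (σ : Finset (Fin g)) (j : Fin g), ¬(j = i ∧ i ∈ σ) →
      e ∉ C j ∩ uniqueUnion C σ := by
    rintro σ j h ⟨hj, hU⟩
    obtain ⟨k, ⟨hkσ, hke⟩, -⟩ := hU
    exact h ⟨huniq j hj, by rwa [huniq k hke] at hkσ⟩
  have hcard : ∀ (σ : Finset (Fin g)) (j : Fin g),
      ((C j \ {e}) ∩ uniqueUnion (fun k => C k \ {e}) σ) =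
        (C j ∩ uniqueUnion C σ) \ {e} := by
    intro σ j
    rw [hUU]
    ext x
    simp only [Set.mem_inter_iff, Set.mem_diff, Set.mem_singleton_iff]
    tauto
  have hkey : ∀ (a : Fin g → ℕ) (σ : Finset (Fin g)) (j : Fin g), j ∈ σ →
      (a j < ((C j \ {e}) ∩ uniqueUnion (fun k => C k \ {e}) σ).ncard ↔
        Function.update a i (a i + 1) j < (C j ∩ uniqueUnion C σ).ncard) := by
    intro a σ j hjσ
    rw [hcard]
    by_cases hji : j = i
    · subst hji
      rw [Function.update_self]
      have hfinS : (C j ∩ uniqueUnion C σ).Finite := (hfin j).inter_of_left _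
      have heS : e ∈ C j ∩ uniqueUnion C σ := ⟨hei, heUU σ hjσ⟩
      rw [Set.ncard_diff_singleton_of_mem heS]
      have h1 : 0 < (C j ∩ uniqueUnion C σ).ncard := (Set.ncard_pos hfinS).mpr ⟨e, heS⟩
      omega
    · rw [Function.update_of_ne hji,
        Set.diff_singleton_eq_self (hne σ j fun h => hji h.1)]
  have part1 : ∀ a : Fin g → ℕ,
      IsCoparking (fun j => C j \ {e}) a ↔ IsCoparking C (Function.update a i (a i + 1)) := by
    intro a
    constructor
    · intro h σ hσ
      obtain ⟨j, hjσ, hj⟩ := h σ hσ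
      exact ⟨j, hjσ, (hkey a σ j hjσ).1 hj⟩
    · intro h σ hσ
      obtain ⟨j, hjσ, hj⟩ := h σ hσ
      exact ⟨j, hjσ, (hkey a σ j hjσ).2 hj⟩
  refine ⟨part1, ?_⟩
  ext b
  simp only [Set.mem_setOf_eq, Set.mem_image]
  constructor
  · rintro ⟨hb, hbi⟩
    have hupd : Function.update (Function.update b i (b i - 1)) i
        ((Function.update b i (b i - 1)) i + 1) = b := by
      rw [Function.update_self, Function.update_idem]
      have hx : b i - 1 + 1 = b i := by omega
      rw [hx, Function.update_eq_self]
    refine ⟨Function.update b i (b i - 1), ?_, hupd⟩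
    rw [part1, hupd]
    exact hb
  · rintro ⟨a, ha, rfl⟩
    refine ⟨(part1 a).1 ha, ?_⟩
    simp
end

section
/- Let M be a matroid on a finite ground set with rank r, let C = (C_1, …, C_g) be a cycle system for M, and let P*(C) be the (finite) set of coparking functions with respect to C. Then the following identity of polynomials with integer coefficients holds: ∑_{a ∈ P*(C)} X^{r − deg(a)} = ∑_{I independent in M} (X − 1)^{r − |I|}. Equivalently, for every k ≥ 0, the number of coparking functions a ∈ P*(C) with deg(a) = k equals the k-th entry h_k of the h-vector of M. -/
open Set Matroid

attribute [local instance 10] Classical.propDecidable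

/-! ### unique union basics -/

section UU

variable {α ι : Type*} {A C : ι → Set α} {σ : Finset ι} {e x : α} {i j : ι}

lemma mem_uniqueUnion :
    e ∈ uniqueUnion A σ ↔ ∃ i ∈ σ, e ∈ A i ∧ ∀ j ∈ σ, e ∈ A j → j = i := by
  constructor
  · rintro ⟨i, ⟨hiσ, hei⟩, hu⟩
    exact ⟨i, hiσ, hei, fun j hj hej => hu j ⟨hj, hej⟩⟩
  · rintro ⟨i, hiσ, hei, hu⟩
    exact ⟨i, ⟨hiσ, hei⟩, fun j ⟨hj, hej⟩ => hu j hj hej⟩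

lemma uniqueUnion_singleton (A : ι → Set α) (i : ι) : uniqueUnion A {i} = A i := by
  ext e
  simp only [mem_uniqueUnion, Finset.mem_singleton]
  constructor
  · rintro ⟨j, rfl, he, -⟩; exact he
  · intro he; exact ⟨i, rfl, he, fun j hj _ => hj⟩

lemma uniqueUnion_subset_iUnion (A : ι → Set α) (σ : Finset ι) :
    uniqueUnion A σ ⊆ ⋃ i ∈ σ, A i := by
  rintro e he
  rw [mem_uniqueUnion] at he
  obtain ⟨i, hi, hei, -⟩ := he
  exact mem_biUnion hi hei

/-- `x` occurs in `C j` and in no other member of the family. -/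
def IsPrivate (C : ι → Set α) (j : ι) (x : α) : Prop :=
  x ∈ C j ∧ ∀ i, i ≠ j → x ∉ C i

lemma IsPrivate.mem_uu_iff (h : IsPrivate C j x) : x ∈ uniqueUnion C σ ↔ j ∈ σ := by
  rw [mem_uniqueUnion]
  constructor
  · rintro ⟨i, hi, hxi, -⟩
    rcases eq_or_ne i j with rfl | hne
    · exact hi
    · exact absurd hxi (h.2 i hne)
  · intro hj
    refine ⟨j, hj, h.1, fun k hk hxk => ?_⟩
    by_contra hne
    exact h.2 k hne hxk

lemma uniqueUnion_diff_singleton (C : ι → Set α) (x : α) (σ : Finset ι) :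
    uniqueUnion (fun i => C i \ {x}) σ = uniqueUnion C σ \ {x} := by
  ext e
  simp only [mem_uniqueUnion, mem_diff, mem_singleton_iff]
  rcases eq_or_ne e x with rfl | hne
  · constructor
    · rintro ⟨i, hi, ⟨-, h⟩, -⟩; exact absurd rfl h
    · rintro ⟨-, h⟩; exact absurd rfl h
  · simp only [hne, not_false_eq_true, and_true]

lemma uniqueUnion_subtype (C : ι → Set α) (p : ι → Prop) (σ : Finset {i // p i}) :
    uniqueUnion (fun i : {i // p i} => C i) σ
      = uniqueUnion C (σ.map ⟨Subtype.val, Subtype.val_injective⟩) := by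
  ext e
  simp only [mem_uniqueUnion, Finset.mem_map, Function.Embedding.coeFn_mk]
  constructor
  · rintro ⟨i, hi, hei, hu⟩
    refine ⟨i.1, ⟨i, hi, rfl⟩, hei, ?_⟩
    rintro j ⟨j', hj', rfl⟩ hej
    exact congrArg Subtype.val (hu j' hj' hej)
  · rintro ⟨i, ⟨i', hi', rfl⟩, hei, hu⟩
    refine ⟨i', hi', hei, fun j hj hej => ?_⟩
    exact Subtype.val_injective (hu j.1 ⟨j, hj, rfl⟩ hej)

end UU

/-! ### Matroid toolkit -/

namespace Matroid

variable {α : Type*} {M : Matroid α} {B I D K Cir R : Set α} {x e : α}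

lemma rkNat_eq_ncard_base (hB : M.IsBase B) : M.rkNat = B.ncard :=
  M.exists_isBase.choose_spec.ncard_eq_ncard_of_isBase hB

lemma Circuit.dep (h : M.Circuit Cir) : M.Dep Cir := h.1

lemma Circuit.subset_ground (h : M.Circuit Cir) : Cir ⊆ M.E := h.1.subset_ground

lemma Circuit.ssubset_indep (h : M.Circuit Cir) (hD : D ⊂ Cir) : M.Indep D := by
  by_contra hdep
  have hDdep : M.Dep D := ⟨hdep, hD.subset.trans h.subset_ground⟩
  exact hD.not_subset (h.2 hDdep hD.subset)

lemma Circuit.diff_singleton_indep (h : M.Circuit Cir) (hx : x ∈ Cir) :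
    M.Indep (Cir \ {x}) :=
  h.ssubset_indep (Set.sdiff_singleton_ssubset.2 hx)

lemma exists_circuit_subset (hD : M.Dep D) (hfin : D.Finite) :
    ∃ Cir, M.Circuit Cir ∧ Cir ⊆ D := by
  obtain ⟨n, hn⟩ : ∃ n, D.ncard = n := ⟨_, rfl⟩
  induction n using Nat.strong_induction_on generalizing D with
  | _ n IH =>
    by_cases hmin : Minimal M.Dep D
    · exact ⟨D, hmin, subset_rfl⟩
    · rw [Minimal, not_and] at hmin
      push_neg at hmin
      obtain ⟨D', hD', hsub, hns⟩ := hmin hD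
      have hss : D' ⊂ D := ssubset_iff_subset_not_subset.2 ⟨hsub, hns⟩
      obtain ⟨Cir, hCir, hCsub⟩ :=
        IH D'.ncard (hn ▸ Set.ncard_lt_ncard hss hfin) hD' (hfin.subset hsub) rfl
      exact ⟨Cir, hCir, hCsub.trans hsub⟩

lemma Indep.not_mem_of_loop (hI : M.Indep I) (he : M.Dep {e}) : e ∉ I := fun h =>
  he.not_indep (hI.subset (Set.singleton_subset_iff.2 h))

lemma IsCycle.subset_ground (h : M.IsCycle K) : K ⊆ M.E := by
  obtain ⟨S, hS, rfl⟩ := h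
  exact sUnion_subset fun C hC => (hS C hC).subset_ground

lemma IsCycle.exists_circuit (h : M.IsCycle K) (hx : x ∈ K) :
    ∃ Cir, M.Circuit Cir ∧ Cir ⊆ K ∧ x ∈ Cir := by
  obtain ⟨S, hS, rfl⟩ := h
  obtain ⟨Cir, hCir, hxC⟩ := hx
  exact ⟨Cir, hS _ hCir, subset_sUnion_of_mem hCir, hxC⟩

lemma isCycle_of_forall (h : ∀ x ∈ K, ∃ Cir, M.Circuit Cir ∧ Cir ⊆ K ∧ x ∈ Cir) :
    M.IsCycle K := by
  refine ⟨{Cir | M.Circuit Cir ∧ Cir ⊆ K}, fun C hC => hC.1, subset_antisymm ?_ ?_⟩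
  · intro x hx
    obtain ⟨Cir, h1, h2, h3⟩ := h x hx
    exact ⟨Cir, ⟨h1, h2⟩, h3⟩
  · exact sUnion_subset fun C hC => hC.2

lemma Circuit.exists_base_not_mem (hC : M.Circuit Cir) (hx : x ∈ Cir) :
    ∃ B, M.IsBase B ∧ x ∉ B := by
  obtain ⟨B, hB, hsub⟩ := (hC.diff_singleton_indep hx).exists_isBase_superset
  refine ⟨B, hB, fun hxB => ?_⟩
  have hCB : Cir ⊆ B := by
    intro y hy
    rcases eq_or_ne y x with rfl | hne
    · exact hxB
    · exact hsub ⟨hy, hne⟩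
  exact hC.dep.not_indep (hB.indep.subset hCB)

lemma IsBase.base_restrict_of_notMem (hB : M.IsBase B) (hx : x ∉ B) :
    (M ↾ (M.E \ {x})).IsBase B := by
  rw [isBase_restrict_iff diff_subset, isBasis_iff]
  refine ⟨hB.indep, subset_diff_singleton hB.subset_ground hx, fun J hJ hBJ _ => ?_⟩
  exact hB.eq_of_subset_indep hJ hBJ

lemma rkNat_restrict_of_base_not_mem (hB : M.IsBase B) (hx : x ∉ B) :
    (M ↾ (M.E \ {x})).rkNat = M.rkNat := by
  rw [rkNat_eq_ncard_base (hB.base_restrict_of_notMem hx), rkNat_eq_ncard_base hB]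

lemma Dep.dep_restrict (hD : M.Dep D) (hDR : D ⊆ R) (hR : R ⊆ M.E) : (M ↾ R).Dep D := by
  rw [restrict_dep_iff]
  exact ⟨hD.not_indep, hDR⟩

lemma Circuit.circuit_restrict (hC : M.Circuit Cir) (hCR : Cir ⊆ R) (hR : R ⊆ M.E) :
    (M ↾ R).Circuit Cir := by
  constructor
  · exact hC.dep.dep_restrict hCR hR
  · intro D hD hsub
    rw [restrict_dep_iff] at hD
    exact hC.2 ⟨hD.1, (hD.2.trans hR)⟩ hsub

lemma IsCycle.cycle_restrict (hK : M.IsCycle K) (hKR : K ⊆ R) (hR : R ⊆ M.E) :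
    (M ↾ R).IsCycle K := by
  apply isCycle_of_forall
  intro x hx
  obtain ⟨Cir, hCir, hsub, hmem⟩ := hK.exists_circuit hx
  exact ⟨Cir, hCir.circuit_restrict (hsub.trans hKR) hR, hsub, hmem⟩

end Matroid

/-! ### Single-element contraction for finite matroids -/

namespace Matroid

variable {α : Type*} {M : Matroid α} {x : α}

/-- Contraction of a single non-loop element `x` of a matroid with finite ground set,
constructed directly via its independent sets. -/
noncomputable def conElem (M : Matroid α) (x : α) (hx : M.Indep {x}) (hE : M.E.Finite) :
    Matroid α :=
  (IndepMatroid.ofFinite (E := M.E \ {x}) (hE.diff)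
    (fun J => J ⊆ M.E \ {x} ∧ M.Indep (insert x J))
    ⟨Set.empty_subset _, by simpa using hx⟩
    (fun I J hJ hIJ => ⟨hIJ.trans hJ.1, hJ.2.subset (Set.insert_subset_insert hIJ)⟩)
    (fun I J hI hJ hcard => by
      have hxI : x ∉ I := fun h => (hI.1 h).2 rfl
      have hxJ : x ∉ J := fun h => (hJ.1 h).2 rfl
      have hIfin : I.Finite := (hE.diff).subset hI.1
      have hJfin : J.Finite := (hE.diff).subset hJ.1
      have hlt : (insert x I).encard < (insert x J).encard := by
        rw [Set.encard_insert_of_notMem hxI, Set.encard_insert_of_notMem hxJ,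
          ← hIfin.cast_ncard_eq, ← hJfin.cast_ncard_eq]
        have h1 : ((I.ncard : ℕ∞) + 1) = ((I.ncard + 1 : ℕ) : ℕ∞) := by push_cast; ring
        have h2 : ((J.ncard : ℕ∞) + 1) = ((J.ncard + 1 : ℕ) : ℕ∞) := by push_cast; ring
        rw [h1, h2, Nat.cast_lt]
        omega
      obtain ⟨e, heJI, hind⟩ := hI.2.augment hJ.2 hlt
      have hex : e ≠ x := fun h => heJI.2 (h ▸ Set.mem_insert x I)
      have heJ : e ∈ J := by
        rcases Set.mem_insert_iff.1 heJI.1 with h | h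
        · exact absurd h hex
        · exact h
      refine ⟨e, heJ, fun h => heJI.2 (Set.mem_insert_of_mem _ h), ?_, ?_⟩
      · exact Set.insert_subset (hJ.1 heJ) hI.1
      · rwa [Set.insert_comm] at hind)
    (fun I hI => hI.1)).matroid

@[simp] lemma conElem_ground (hx : M.Indep {x}) (hE : M.E.Finite) :
    (M.conElem x hx hE).E = M.E \ {x} := rfl

@[simp] lemma conElem_indep_iff (hx : M.Indep {x}) (hE : M.E.Finite) {J : Set α} :
    (M.conElem x hx hE).Indep J ↔ J ⊆ M.E \ {x} ∧ M.Indep (insert x J) := Iff.rfl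

end Matroid

namespace Matroid

variable {α : Type*} {M : Matroid α} {x e y : α} {B I J D K Cir : Set α}

lemma conElem_dep (hx : M.Indep {x}) (hE : M.E.Finite) (hD : M.Dep D) :
    (M.conElem x hx hE).Dep (D \ {x}) := by
  have hsub : D \ {x} ⊆ M.E \ {x} := diff_subset_diff_left hD.subset_ground
  rw [dep_iff, conElem_indep_iff]
  refine ⟨fun h => ?_, hsub⟩
  have hDsub : D ⊆ insert x (D \ {x}) := by
    intro z hz
    rcases eq_or_ne z x with rfl | hne
    · exact Set.mem_insert _ _
    · exact Set.mem_insert_of_mem _ ⟨hz, hne⟩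
  exact hD.not_indep (h.2.subset hDsub)

lemma conElem_base_iff (hx : M.Indep {x}) (hE : M.E.Finite) :
    (M.conElem x hx hE).IsBase J ↔ x ∉ J ∧ M.IsBase (insert x J) := by
  constructor
  · intro hJ
    have hJi := hJ.indep
    rw [conElem_indep_iff] at hJi
    have hxJ : x ∉ J := fun h => (hJi.1 h).2 rfl
    refine ⟨hxJ, hJi.2.isBase_of_maximal fun K hK hsubK => ?_⟩
    have hxK : x ∈ K := hsubK (Set.mem_insert _ _)
    have hKi : (M.conElem x hx hE).Indep (K \ {x}) := by
      rw [conElem_indep_iff, Set.insert_diff_singleton, Set.insert_eq_of_mem hxK]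
      exact ⟨diff_subset_diff_left hK.subset_ground, hK⟩
    have hJK : J ⊆ K \ {x} :=
      subset_diff_singleton ((Set.subset_insert x J).trans hsubK) hxJ
    have hJeq : J = K \ {x} := hJ.eq_of_subset_indep hKi hJK
    rw [hJeq, Set.insert_diff_singleton, Set.insert_eq_of_mem hxK]
  · rintro ⟨hxJ, hB⟩
    have hJi : (M.conElem x hx hE).Indep J := by
      rw [conElem_indep_iff]
      exact ⟨subset_diff_singleton ((Set.subset_insert x J).trans hB.subset_ground) hxJ,
        hB.indep⟩
    refine hJi.isBase_of_maximal fun K hK hJK => ?_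
    rw [conElem_indep_iff] at hK
    have heq : insert x J = insert x K :=
      hB.eq_of_subset_indep hK.2 (Set.insert_subset_insert hJK)
    apply subset_antisymm hJK
    intro y hyK
    have : y ∈ insert x J := heq ▸ Set.mem_insert_of_mem x hyK
    rcases Set.mem_insert_iff.1 this with rfl | h
    · exact absurd (hK.1 hyK).2 (not_not_intro rfl)
    · exact h

lemma conElem_rkNat (hx : M.Indep {x}) (hE : M.E.Finite) :
    (M.conElem x hx hE).rkNat + 1 = M.rkNat := by
  obtain ⟨B, hB, hsub⟩ := hx.exists_isBase_superset
  have hxB : x ∈ B := hsub rfl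
  have hBbase : (M.conElem x hx hE).IsBase (B \ {x}) := by
    rw [conElem_base_iff]
    refine ⟨fun h => h.2 rfl, ?_⟩
    rwa [Set.insert_diff_singleton, Set.insert_eq_of_mem hxB]
  rw [rkNat_eq_ncard_base hBbase, rkNat_eq_ncard_base hB]
  exact Set.ncard_diff_singleton_add_one hxB (hE.subset hB.subset_ground)

lemma conElem_circuit_of_mem (hx : M.Indep {x}) (hE : M.E.Finite) (hCir : M.Circuit Cir)
    (hxC : x ∈ Cir) : (M.conElem x hx hE).Circuit (Cir \ {x}) := by
  constructor
  · exact conElem_dep hx hE hCir.dep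
  · intro D hD hsub
    rw [dep_iff, conElem_indep_iff, conElem_ground] at hD
    have hxD : x ∉ D := fun h => (hD.2 h).2 rfl
    have hDdep : M.Dep (insert x D) := by
      rw [dep_iff]
      constructor
      · intro hind
        exact hD.1 ⟨hD.2, hind⟩
      · exact Set.insert_subset (hCir.subset_ground hxC)
          ((hD.2.trans diff_subset))
    have hCs : Cir ⊆ insert x D :=
      hCir.2 hDdep (Set.insert_subset hxC (hsub.trans diff_subset))
    intro z hz
    rcases Set.mem_insert_iff.1 (hCs hz.1) with rfl | h
    · exact absurd rfl hz.2
    · exact h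

lemma conElem_exists_circuit (hx : M.Indep {x}) (hE : M.E.Finite) (hCir : M.Circuit Cir)
    (hxC : x ∉ Cir) (hy : y ∈ Cir) :
    ∃ C', (M.conElem x hx hE).Circuit C' ∧ C' ⊆ Cir ∧ y ∈ C' := by
  set N := M.conElem x hx hE with hN
  have hCE : Cir \ {y} ⊆ N.E := by
    rw [conElem_ground]
    exact (diff_subset.trans (subset_diff_singleton hCir.subset_ground hxC))
  obtain ⟨J, hJ⟩ := N.exists_isBasis (Cir \ {y}) hCE
  have hJCir : J ⊆ Cir \ {y} := hJ.subset
  have hyJ : y ∉ J := fun h => (hJCir h).2 rfl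
  by_cases hyind : N.Indep (insert y J)
  · exfalso
    -- closure argument
    have hyE : y ∈ M.E := hCir.subset_ground hy
    have hyx : y ≠ x := fun h => hxC (h ▸ hy)
    have hXind : M.Indep (insert x J) := (hyind.2.subset (by
      rw [Set.insert_comm]; exact Set.subset_insert _ _))
    have hXE : insert x J ⊆ M.E := hXind.subset_ground
    have hclA : ∀ z ∈ Cir \ {y}, z ∉ J → z ∈ M.closure (insert x J) := by
      intro z hz hzJ
      have hzdep : N.Dep (insert z J) := hJ.insert_dep ⟨hz, hzJ⟩
      have hzx : z ≠ x := fun h => hxC (h ▸ hz.1)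
      have : ¬ M.Indep (insert z (insert x J)) := by
        intro hind
        apply hzdep.not_indep
        rw [conElem_indep_iff]
        refine ⟨Set.insert_subset ⟨hCir.subset_ground hz.1, hzx⟩ hJ.left_subset_ground, ?_⟩
        rwa [Set.insert_comm]
      have hzX : z ∉ insert x J := fun h => by
        rcases Set.mem_insert_iff.1 h with rfl | h'
        · exact hzx rfl
        · exact hzJ h'
      have := (hXind.insert_indep_iff_of_notMem hzX).not.1 this
      rw [Set.mem_diff] at this
      push_neg at this
      exact this (hCir.subset_ground hz.1)
    have hclB : Cir \ {y} ⊆ M.closure (insert x J) := by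
      intro z hz
      by_cases hzJ : z ∈ J
      · exact M.subset_closure (insert x J) hXE (Set.mem_insert_of_mem _ hzJ)
      · exact hclA z hz hzJ
    have hyc : y ∈ M.closure (Cir \ {y}) := by
      have hind : M.Indep (Cir \ {y}) := hCir.diff_singleton_indep hy
      have hnin : ¬ M.Indep (insert y (Cir \ {y})) := by
        rw [Set.insert_diff_singleton, Set.insert_eq_of_mem hy]
        exact hCir.dep.not_indep
      by_contra hnc
      exact hnin ((hind.insert_indep_iff_of_notMem (fun h => h.2 rfl)).2 ⟨hyE, hnc⟩)
    have hycl : y ∈ M.closure (insert x J) := by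
      have h1 := M.closure_subset_closure hclB
      rw [closure_closure] at h1
      exact h1 hyc
    have hyX : y ∉ insert x J := fun h => by
      rcases Set.mem_insert_iff.1 h with rfl | h'
      · exact hyx rfl
      · exact hyJ h'
    have : M.Indep (insert y (insert x J)) := by
      rw [Set.insert_comm]
      exact hyind.2
    rw [hXind.insert_indep_iff_of_notMem hyX] at this
    exact this.2 hycl
  · have hdep : N.Dep (insert y J) := by
      rw [dep_iff]
      refine ⟨hyind, Set.insert_subset ?_ (hJ.left_subset_ground)⟩
      rw [conElem_ground]
      exact ⟨hCir.subset_ground hy, fun h => hxC (h ▸ hy)⟩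
    have hfin : (insert y J).Finite :=
      (hE.diff).subset hdep.subset_ground
    obtain ⟨C', hC', hC'sub⟩ := exists_circuit_subset hdep hfin
    refine ⟨C', hC', ?_, ?_⟩
    · exact hC'sub.trans (Set.insert_subset hy (hJCir.trans diff_subset))
    · by_contra hyC'
      exact hC'.dep.not_indep (hJ.indep.subset fun z hz =>
        (Set.mem_insert_iff.1 (hC'sub hz)).elim
          (fun h => absurd (h ▸ hz) hyC') id)

lemma conElem_cycle (hx : M.Indep {x}) (hE : M.E.Finite) (hK : M.IsCycle K) :
    (M.conElem x hx hE).IsCycle (K \ {x}) := by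
  apply isCycle_of_forall
  rintro z ⟨hzK, hzx⟩
  obtain ⟨Cir, hCir, hsub, hmem⟩ := hK.exists_circuit hzK
  by_cases hxC : x ∈ Cir
  · exact ⟨Cir \ {x}, conElem_circuit_of_mem hx hE hCir hxC,
      diff_subset_diff_left hsub, ⟨hmem, hzx⟩⟩
  · obtain ⟨C', h1, h2, h3⟩ := conElem_exists_circuit hx hE hCir hxC hmem
    refine ⟨C', h1, ?_, h3⟩
    refine (subset_diff_singleton (h2.trans hsub) ?_)
    exact fun h => hxC (h2 h)

end Matroid

/-! ### Cycle systems under deletion and contraction; the corank bound -/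

namespace Matroid

variable {α : Type*} {ι : Type*} [Fintype ι] {M : Matroid α} {B R D K Cir : Set α} {x e : α}
  {C : ι → Set α} {j : ι}

lemma IsBase.base_restrict_of_subset (hB : M.IsBase B) (hBR : B ⊆ R) (hR : R ⊆ M.E) :
    (M ↾ R).IsBase B := by
  rw [isBase_restrict_iff hR, isBasis_iff]
  exact ⟨hB.indep, hBR, fun J hJ hBJ _ => hB.eq_of_subset_indep hJ hBJ⟩

lemma rkNat_restrict_eq (hB : M.IsBase B) (hBR : B ⊆ R) (hR : R ⊆ M.E) :
    (M ↾ R).rkNat = M.rkNat := by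
  rw [rkNat_eq_ncard_base (hB.base_restrict_of_subset hBR hR), rkNat_eq_ncard_base hB]

lemma rkNat_le_ncard_ground (M : Matroid α) (hE : M.E.Finite) : M.rkNat ≤ M.E.ncard := by
  obtain ⟨B, hB⟩ := M.exists_isBase
  rw [rkNat_eq_ncard_base hB]
  exact Set.ncard_le_ncard hB.subset_ground hE

/-- A family of cycles of `M` all of whose unique unions are dependent has at most
`corank M` members. -/
lemma rkNat_add_card_le_of_cycle_family :
    ∀ (k : ℕ) (M : Matroid α), M.E.Finite → ∀ {ι : Type} [Fintype ι], ∀ D : ι → Set α,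
    Fintype.card ι = k → (∀ i, M.IsCycle (D i)) →
    (∀ σ : Finset ι, σ.Nonempty → M.Dep (uniqueUnion D σ)) →
    M.rkNat + k ≤ M.E.ncard := by
  intro k
  induction k with
  | zero => intro M hE ι _ D _ _ _; simpa using M.rkNat_le_ncard_ground hE
  | succ k IH =>
    intro M hE ι inst D hcard hcyc hdep
    classical
    have hne : Nonempty ι := Fintype.card_pos_iff.1 (by omega)
    have huniv : (Finset.univ : Finset ι).Nonempty := Finset.univ_nonempty
    obtain ⟨x, hxuu⟩ := (hdep Finset.univ huniv).nonempty
    rw [mem_uniqueUnion] at hxuu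
    obtain ⟨j, -, hxj, huniq⟩ := hxuu
    have hpriv : ∀ i, i ≠ j → x ∉ D i := by
      intro i hi hmem
      exact hi (huniq i (Finset.mem_univ i) hmem)
    obtain ⟨Cir, hCir, hCsub, hxC⟩ := (hcyc j).exists_circuit hxj
    obtain ⟨B, hB, hxB⟩ := hCir.exists_base_not_mem hxC
    have hxE : x ∈ M.E := (hcyc j).subset_ground hxj
    set M' := M ↾ (M.E \ {x}) with hM'
    have hrk : M'.rkNat = M.rkNat :=
      rkNat_restrict_eq hB (subset_diff_singleton hB.subset_ground hxB) diff_subset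
    have hE' : M'.E.Finite := hE.diff
    have hcard' : Fintype.card {i : ι // i ≠ j} = k := by
      have := Fintype.card_subtype_compl (fun i : ι => i = j)
      simp only [Fintype.card_subtype_eq] at this
      have h2 : Fintype.card {i : ι // i ≠ j} = Fintype.card {i : ι // ¬ i = j} := rfl
      omega
    have hcyc' : ∀ i : {i : ι // i ≠ j}, M'.IsCycle (D i) := by
      intro i
      refine (hcyc i).cycle_restrict (subset_diff_singleton ((hcyc i).subset_ground)
        (hpriv i i.2)) diff_subset
    have hdep' : ∀ σ : Finset {i : ι // i ≠ j}, σ.Nonempty →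
        M'.Dep (uniqueUnion (fun i : {i : ι // i ≠ j} => D i) σ) := by
      intro σ hσ
      rw [uniqueUnion_subtype]
      set τ := σ.map ⟨Subtype.val, Subtype.val_injective⟩ with hτ
      have hτne : τ.Nonempty := hσ.map
      refine (hdep τ hτne).dep_restrict ?_ diff_subset
      intro z hz
      refine ⟨(hdep τ hτne).subset_ground hz, ?_⟩
      intro hzx
      subst hzx
      rw [mem_uniqueUnion] at hz
      obtain ⟨i, hiτ, hzi, -⟩ := hz
      obtain ⟨i', -, rfl⟩ := Finset.mem_map.1 hiτ
      exact hpriv i' i'.2 hzi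
    have hIH := IH M' hE' (fun i : {i : ι // i ≠ j} => D i) hcard' hcyc' hdep'
    have hEE : M'.E.ncard = M.E.ncard - 1 := by
      rw [hM', restrict_ground_eq]
      exact Set.ncard_diff_singleton_of_mem hxE
    have hpos : 1 ≤ M.E.ncard := by
      have : ({x} : Set α).ncard ≤ M.E.ncard :=
        Set.ncard_le_ncard (Set.singleton_subset_iff.2 hxE) hE
      simpa using this
    omega

end Matroid

namespace Matroid

variable {α : Type*} {ι : Type} [Fintype ι] {M : Matroid α} {C : ι → Set α} {j : ι} {x e : α}

lemma card_subtype_ne (j : ι) :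
    Fintype.card {i : ι // i ≠ j} = Fintype.card ι - 1 := by
  have := Fintype.card_subtype_compl (fun i : ι => i = j)
  simp only [Fintype.card_subtype_eq] at this
  have h2 : Fintype.card {i : ι // i ≠ j} = Fintype.card {i : ι // ¬ i = j} := rfl
  omega

lemma IsCycleSystem.subset_ground' (hCS : M.IsCycleSystem C) (i : ι) : C i ⊆ M.E :=
  (hCS.2.1 i).subset_ground

lemma IsCycleSystem.cycle_nonempty (hCS : M.IsCycleSystem C) (i : ι) : (C i).Nonempty := by
  have := (hCS.2.2 {i} ⟨i, Finset.mem_singleton_self i⟩).nonempty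
  rwa [uniqueUnion_singleton] at this

lemma IsCycleSystem.exists_base_not_mem (hCS : M.IsCycleSystem C) {i : ι} (hx : x ∈ C i) :
    ∃ B, M.IsBase B ∧ x ∉ B := by
  obtain ⟨Cir, hCir, -, hxC⟩ := (hCS.2.1 i).exists_circuit hx
  exact hCir.exists_base_not_mem hxC

lemma uu_subset_ground (hCS : M.IsCycleSystem C) (σ : Finset ι) :
    uniqueUnion C σ ⊆ M.E := fun z hz => by
  rw [mem_uniqueUnion] at hz
  obtain ⟨i, -, hzi, -⟩ := hz
  exact hCS.subset_ground' i hzi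

lemma not_mem_uu_of_private (hpriv : IsPrivate C j x) {σ : Finset ι} (hj : j ∉ σ) :
    x ∉ uniqueUnion C σ := fun h => hj (hpriv.mem_uu_iff.1 h)

/-- Deleting a private element of `C j` from `M` yields a cycle system indexed
by the complement of `j`. -/
lemma IsCycleSystem.delete_private (hCS : M.IsCycleSystem C) (hE : M.E.Finite)
    (hpriv : IsPrivate C j x) :
    (M ↾ (M.E \ {x})).IsCycleSystem (fun i : {i : ι // i ≠ j} => C i) := by
  classical
  obtain ⟨B, hB, hxB⟩ := hCS.exists_base_not_mem hpriv.1
  have hxE : x ∈ M.E := hCS.subset_ground' j hpriv.1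
  have hrk : (M ↾ (M.E \ {x})).rkNat = M.rkNat :=
    rkNat_restrict_eq hB (subset_diff_singleton hB.subset_ground hxB) diff_subset
  refine ⟨?_, ?_, ?_⟩
  · rw [card_subtype_ne j, hCS.1, hrk, restrict_ground_eq,
      Set.ncard_diff_singleton_of_mem hxE]
    omega
  · intro i
    exact (hCS.2.1 i).cycle_restrict
      (subset_diff_singleton (hCS.subset_ground' i) (hpriv.2 i i.2)) diff_subset
  · intro σ hσ
    rw [uniqueUnion_subtype]
    set τ := σ.map ⟨Subtype.val, Subtype.val_injective⟩ with hτ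
    have hτne : τ.Nonempty := hσ.map
    refine (hCS.2.2 τ hτne).dep_restrict ?_ diff_subset
    refine subset_diff_singleton (uu_subset_ground hCS τ) ?_
    refine not_mem_uu_of_private hpriv ?_
    intro hj
    obtain ⟨i', -, hival⟩ := Finset.mem_map.1 hj
    exact i'.2 hival

/-- A loop that is private to some member of a cycle system admits no other private
element of the same member. -/
lemma no_second_private_of_loop (hCS : M.IsCycleSystem C) (hE : M.E.Finite)
    (he : M.Dep {e}) (hepriv : IsPrivate C j e) (hx : x ≠ e) (hxpriv : IsPrivate C j x) :
    False := by
  classical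
  have hxE : x ∈ M.E := hCS.subset_ground' j hxpriv.1
  have heE : e ∈ M.E := hCS.subset_ground' j hepriv.1
  obtain ⟨B, hB, hxB⟩ := hCS.exists_base_not_mem hxpriv.1
  have heB : e ∉ B := hB.indep.not_mem_of_loop he
  set R := (M.E \ {x}) \ {e} with hR
  have hRE : R ⊆ M.E := diff_subset.trans diff_subset
  have hBR : B ⊆ R :=
    subset_diff_singleton (subset_diff_singleton hB.subset_ground hxB) heB
  have hrk : (M ↾ R).rkNat = M.rkNat := rkNat_restrict_eq hB hBR hRE
  have hcyc : ∀ i : {i : ι // i ≠ j}, (M ↾ R).IsCycle (C i) := by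
    intro i
    refine (hCS.2.1 i).cycle_restrict ?_ hRE
    exact subset_diff_singleton
      (subset_diff_singleton (hCS.subset_ground' i) (hxpriv.2 i i.2)) (hepriv.2 i i.2)
  have hdep : ∀ σ : Finset {i : ι // i ≠ j}, σ.Nonempty →
      (M ↾ R).Dep (uniqueUnion (fun i : {i : ι // i ≠ j} => C i) σ) := by
    intro σ hσ
    rw [uniqueUnion_subtype]
    set τ := σ.map ⟨Subtype.val, Subtype.val_injective⟩ with hτ
    have hτne : τ.Nonempty := hσ.map
    have hjτ : j ∉ τ := by
      intro hj
      obtain ⟨i', -, hival⟩ := Finset.mem_map.1 hj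
      exact i'.2 hival
    refine (hCS.2.2 τ hτne).dep_restrict ?_ hRE
    exact subset_diff_singleton
      (subset_diff_singleton (uu_subset_ground hCS τ) (not_mem_uu_of_private hxpriv hjτ))
      (not_mem_uu_of_private hepriv hjτ)
  have hEle := rkNat_add_card_le_of_cycle_family (Fintype.card {i : ι // i ≠ j})
    (M ↾ R) (hE.subset hRE) (fun i : {i : ι // i ≠ j} => C i) rfl hcyc hdep
  rw [hrk, restrict_ground_eq, card_subtype_ne j] at hEle
  have hcard := hCS.1
  have hjcard : 1 ≤ Fintype.card ι := Fintype.card_pos_iff.2 ⟨j⟩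
  have hrle : M.rkNat ≤ M.E.ncard := M.rkNat_le_ncard_ground hE
  have heR : e ∈ M.E \ {x} := ⟨heE, fun h => hx ((Set.mem_singleton_iff.1 h).symm)⟩
  have hR2 : R.ncard = M.E.ncard - 2 := by
    rw [hR, Set.ncard_diff_singleton_of_mem heR,
      Set.ncard_diff_singleton_of_mem hxE]
    omega
  have hE1 : 2 ≤ M.E.ncard := by
    have hsub2 : ({x, e} : Set α).ncard ≤ M.E.ncard :=
      Set.ncard_le_ncard (by simp [Set.insert_subset_iff, hxE, heE]) hE
    rwa [Set.ncard_pair hx] at hsub2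
  omega

/-- If a loop `e` is private to `C j` in a cycle system, then some unique union
containing index `j` is exactly `{e}`. -/
lemma exists_uu_singleton_of_loop :
    ∀ (k : ℕ) (M : Matroid α), M.E.Finite → ∀ {ι : Type} [Fintype ι] (C : ι → Set α)
    (j : ι) (e : α), Fintype.card ι = k → M.IsCycleSystem C → M.Dep {e} →
    IsPrivate C j e → ∃ σ : Finset ι, j ∈ σ ∧ uniqueUnion C σ = {e} := by
  intro k
  induction k using Nat.strong_induction_on with
  | _ k IH =>
  intro M hE ι inst C j e hcard hCS he hpriv
  classical
  have huniv : (Finset.univ : Finset ι).Nonempty := ⟨j, Finset.mem_univ j⟩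
  by_cases hsub : uniqueUnion C Finset.univ ⊆ {e}
  · refine ⟨Finset.univ, Finset.mem_univ j, subset_antisymm hsub ?_⟩
    exact Set.singleton_subset_iff.2 (hpriv.mem_uu_iff.2 (Finset.mem_univ j))
  · obtain ⟨x, hxuu, hxe⟩ := not_subset.1 hsub
    rw [Set.mem_singleton_iff] at hxe
    have hxmem := hxuu
    rw [mem_uniqueUnion] at hxmem
    obtain ⟨i₀, -, hxi₀, huniq⟩ := hxmem
    have hxpriv : IsPrivate C i₀ x :=
      ⟨hxi₀, fun i hi hmem => hi (huniq i (Finset.mem_univ i) hmem)⟩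
    by_cases hij : i₀ = j
    · exact absurd (hij ▸ hxpriv) fun h => no_second_private_of_loop hCS hE he hpriv hxe h
    · have hxE : x ∈ M.E := hCS.subset_ground' i₀ hxpriv.1
      have hCS' := hCS.delete_private hE hxpriv
      have he' : (M ↾ (M.E \ {x})).Dep {e} := by
        refine he.dep_restrict ?_ diff_subset
        refine Set.singleton_subset_iff.2 ⟨hCS.subset_ground' j hpriv.1, ?_⟩
        simp only [Set.mem_singleton_iff]
        exact fun h => hxe h.symm
      have hj' : (⟨j, fun h => hij h.symm⟩ : {i : ι // i ≠ i₀}) = ⟨j, fun h => hij h.symm⟩ := rfl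
      have hpriv' : IsPrivate (fun i : {i : ι // i ≠ i₀} => C i)
          ⟨j, fun h => hij h.symm⟩ e := by
        refine ⟨hpriv.1, fun i hi hmem => ?_⟩
        exact hpriv.2 i.1 (fun h => hi (Subtype.ext h)) hmem
      have hcard' : Fintype.card {i : ι // i ≠ i₀} = k - 1 := by
        rw [card_subtype_ne i₀, hcard]
      have hk : 1 ≤ k := by
        rw [← hcard]
        exact Fintype.card_pos_iff.2 ⟨j⟩
      obtain ⟨σ', hjσ', huu'⟩ := IH (k-1) (by omega) (M ↾ (M.E \ {x})) (hE.diff)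
        (fun i : {i : ι // i ≠ i₀} => C i) ⟨j, fun h => hij h.symm⟩ e hcard' hCS' he' hpriv'
      rw [uniqueUnion_subtype] at huu'
      refine ⟨σ'.map ⟨Subtype.val, Subtype.val_injective⟩, ?_, huu'⟩
      exact Finset.mem_map.2 ⟨⟨j, fun h => hij h.symm⟩, hjσ', rfl⟩

end Matroid

/-! ### Coparking functions: restriction and shifting -/

section Copark

open Polynomial

variable {α : Type*} {ι : Type} [Fintype ι] {C : ι → Set α} {j : ι} {x : α} {a : ι → ℕ}

lemma private_of_mem_uu_univ {x : α} (hx : x ∈ uniqueUnion C Finset.univ) :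
    ∃ j, IsPrivate C j x := by
  rw [mem_uniqueUnion] at hx
  obtain ⟨j, -, hxj, huniq⟩ := hx
  exact ⟨j, hxj, fun i hi hmem => hi (huniq i (Finset.mem_univ i) hmem)⟩

lemma subtype_map_eq {σ : Finset ι} (hjσ : j ∉ σ) :
    (σ.subtype (fun i => i ≠ j)).map ⟨Subtype.val, Subtype.val_injective⟩ = σ := by
  ext z
  simp only [Finset.mem_map, Finset.mem_subtype, Function.Embedding.coeFn_mk]
  constructor
  · rintro ⟨⟨z', hz'⟩, hmem, rfl⟩
    exact hmem
  · intro hz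
    exact ⟨⟨z, fun h => hjσ (h ▸ hz)⟩, hz, rfl⟩

lemma copark_zero_iff (hpriv : IsPrivate C j x) (hfin : ∀ i, (C i).Finite) (ha : a j = 0) :
    IsCoparking C a ↔
      IsCoparking (fun i : {i : ι // i ≠ j} => C i) (fun i : {i : ι // i ≠ j} => a i) := by
  constructor
  · intro h σ' hσ'
    set τ := σ'.map ⟨Subtype.val, Subtype.val_injective⟩ with hτ
    obtain ⟨i, hiτ, hlt⟩ := h τ hσ'.map
    obtain ⟨i', hi'σ', rfl⟩ := Finset.mem_map.1 hiτ
    refine ⟨i', hi'σ', ?_⟩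
    rw [uniqueUnion_subtype]
    exact hlt
  · intro h σ hσ
    by_cases hjσ : j ∈ σ
    · refine ⟨j, hjσ, ?_⟩
      rw [ha]
      rw [Set.ncard_pos (((hfin j).inter_of_left _))]
      exact ⟨x, hpriv.1, hpriv.mem_uu_iff.2 hjσ⟩
    · set σ' := σ.subtype (fun i => i ≠ j) with hσ'def
      have hmap := subtype_map_eq (ι := ι) (j := j) hjσ
      have hσ'ne : σ'.Nonempty := by
        obtain ⟨y, hy⟩ := hσ
        exact ⟨⟨y, fun h => hjσ (h ▸ hy)⟩, Finset.mem_subtype.2 hy⟩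
      obtain ⟨i', hi', hlt⟩ := h σ' hσ'ne
      rw [uniqueUnion_subtype, hmap] at hlt
      exact ⟨i'.1, Finset.mem_subtype.1 hi', hlt⟩

lemma copark_loop_zero {e : α} {σ₀ : Finset ι} (hσ₀ : uniqueUnion C σ₀ = {e})
    (hjσ₀ : j ∈ σ₀) (hpriv : IsPrivate C j e) (h : IsCoparking C a) : a j = 0 := by
  obtain ⟨i, hiσ, hlt⟩ := h σ₀ ⟨j, hjσ₀⟩
  rw [hσ₀] at hlt
  rcases eq_or_ne i j with rfl | hne
  · have : C i ∩ {e} = {e} :=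
      Set.inter_eq_self_of_subset_right (Set.singleton_subset_iff.2 hpriv.1)
    rw [this, Set.ncard_singleton] at hlt
    omega
  · have : C i ∩ {e} = ∅ := by
      apply Set.eq_empty_of_forall_notMem
      rintro z ⟨hz1, hz2⟩
      rw [Set.mem_singleton_iff] at hz2
      exact hpriv.2 i hne (hz2 ▸ hz1)
    rw [this, Set.ncard_empty] at hlt
    omega

lemma copark_shift_iff (hpriv : IsPrivate C j x) (hfin : ∀ i, (C i).Finite) (ha : 1 ≤ a j) :
    IsCoparking C a ↔
      IsCoparking (fun i => C i \ {x}) (Function.update a j (a j - 1)) := by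
  have key : ∀ (σ : Finset ι), ∀ i ∈ σ,
      (Function.update a j (a j - 1) i <
        ((C i \ {x}) ∩ uniqueUnion (fun i => C i \ {x}) σ).ncard ↔
        a i < (C i ∩ uniqueUnion C σ).ncard) := by
    intro σ i hiσ
    have hset : (C i \ {x}) ∩ uniqueUnion (fun i => C i \ {x}) σ
        = (C i ∩ uniqueUnion C σ) \ {x} := by
      rw [uniqueUnion_diff_singleton]
      ext z
      simp only [Set.mem_inter_iff, Set.mem_diff, Set.mem_singleton_iff]
      tauto
    rcases eq_or_ne i j with rfl | hne
    · have hxmem : x ∈ C i ∩ uniqueUnion C σ := ⟨hpriv.1, hpriv.mem_uu_iff.2 hiσ⟩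
      have hfin' : (C i ∩ uniqueUnion C σ).Finite := (hfin i).inter_of_left _
      have hn : 1 ≤ (C i ∩ uniqueUnion C σ).ncard :=
        (Set.ncard_pos hfin').2 ⟨x, hxmem⟩
      rw [hset, Function.update_self, Set.ncard_diff_singleton_of_mem hxmem]
      omega
    · have hxnot : x ∉ C i ∩ uniqueUnion C σ := fun h => hpriv.2 i hne h.1
      rw [hset, Function.update_of_ne hne, Set.diff_singleton_eq_self hxnot]
  constructor
  · intro h σ hσ
    obtain ⟨i, hiσ, hlt⟩ := h σ hσ
    exact ⟨i, hiσ, (key σ i hiσ).2 hlt⟩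
  · intro h σ hσ
    obtain ⟨i, hiσ, hlt⟩ := h σ hσ
    exact ⟨i, hiσ, (key σ i hiσ).1 hlt⟩

lemma copark_finite (C : ι → Set α) (hfin : ∀ i, (C i).Finite) :
    {a : ι → ℕ | IsCoparking C a}.Finite := by
  cases isEmpty_or_nonempty ι with
  | inl h =>
    apply Set.Subsingleton.finite
    intro a _ b _
    funext i
    exact isEmptyElim i
  | inr h =>
    refine (Set.Finite.pi (fun i => Set.finite_Iio ((C i).ncard))).subset ?_
    intro a ha
    rw [Set.mem_pi]
    intro i _
    obtain ⟨i', hi', hlt⟩ := ha {i} ⟨i, Finset.mem_singleton_self i⟩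
    rw [Finset.mem_singleton] at hi'
    subst hi'
    rw [uniqueUnion_singleton, Set.inter_self] at hlt
    exact hlt

end Copark

/-! ### Summation plumbing -/

section Sums

open Polynomial

variable {α : Type*} {ι : Type} [Fintype ι] {C : ι → Set α} {j : ι} {x : α}

lemma finsum_mem_finite_eq_sum {β M₀ : Type*} [AddCommMonoid M₀] {S : Set β} (hS : S.Finite)
    (f : β → M₀) : (∑ᶠ a ∈ S, f a) = ∑ a ∈ hS.toFinset, f a := by
  rw [← finsum_mem_coe_finset, Set.Finite.coe_toFinset]

lemma finset_sum_pow_subsets (s : Finset α) :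
    ∑ t ∈ s.powerset, ((X : Polynomial ℤ) - 1) ^ (s.card - t.card) = X ^ s.card := by
  classical
  induction s using Finset.induction_on with
  | empty => simp
  | @insert a s ha IH =>
    have hdisj : Disjoint s.powerset (s.powerset.image (insert a)) := by
      rw [Finset.disjoint_left]
      intro t ht hti
      obtain ⟨u, hu, rfl⟩ := Finset.mem_image.1 hti
      exact ha (Finset.mem_powerset.1 ht (Finset.mem_insert_self a u))
    have hinj : ∀ t1 ∈ s.powerset, ∀ t2 ∈ s.powerset,
        insert a t1 = insert a t2 → t1 = t2 := by
      intro t1 h1 t2 h2 heq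
      have ha1 : a ∉ t1 := fun h => ha (Finset.mem_powerset.1 h1 h)
      have ha2 : a ∉ t2 := fun h => ha (Finset.mem_powerset.1 h2 h)
      rw [← Finset.erase_insert ha1, ← Finset.erase_insert ha2, heq]
    rw [Finset.powerset_insert, Finset.sum_union hdisj, Finset.sum_image hinj,
      Finset.card_insert_of_notMem ha]
    have h1 : ∑ t ∈ s.powerset, ((X : Polynomial ℤ) - 1) ^ (s.card + 1 - t.card)
        = (∑ t ∈ s.powerset, ((X : Polynomial ℤ) - 1) ^ (s.card - t.card)) * (X - 1) := by
      rw [Finset.sum_mul]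
      refine Finset.sum_congr rfl fun t ht => ?_
      have hle : t.card ≤ s.card := Finset.card_le_card (Finset.mem_powerset.1 ht)
      rw [← pow_succ]
      congr 1
      omega
    have h2 : ∑ t ∈ s.powerset, ((X : Polynomial ℤ) - 1) ^ (s.card + 1 - (insert a t).card)
        = ∑ t ∈ s.powerset, ((X : Polynomial ℤ) - 1) ^ (s.card - t.card) := by
      refine Finset.sum_congr rfl fun t ht => ?_
      have hat : a ∉ t := fun h => ha (Finset.mem_powerset.1 ht h)
      rw [Finset.card_insert_of_notMem hat]
      congr 1
      omega
    rw [h1, h2, IH]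
    ring

lemma sum_subsets_pow_set {s : Set α} (hs : s.Finite) (hsubs : {t : Set α | t ⊆ s}.Finite) :
    ∑ I ∈ hsubs.toFinset, ((X : Polynomial ℤ) - 1) ^ (s.ncard - I.ncard) = X ^ s.ncard := by
  classical
  have hcard : s.ncard = hs.toFinset.card := Set.ncard_eq_toFinset_card s hs
  rw [hcard, ← finset_sum_pow_subsets hs.toFinset]
  refine (Finset.sum_bij (fun (t : Finset α) _ => (t : Set α)) ?_ ?_ ?_ ?_).symm
  · intro t ht
    rw [Set.Finite.mem_toFinset]
    intro z hz
    rw [← hs.coe_toFinset]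
    exact Finset.mem_powerset.1 ht hz
  · intro t1 h1 t2 h2 heq
    exact Finset.coe_injective heq
  · intro I hI
    rw [Set.Finite.mem_toFinset] at hI
    have hIfin : I.Finite := hs.subset hI
    refine ⟨hIfin.toFinset, ?_, hIfin.coe_toFinset⟩
    rw [Finset.mem_powerset, ← Finset.coe_subset, hIfin.coe_toFinset, hs.coe_toFinset]
    exact hI
  · intro t ht
    rw [Set.ncard_coe_finset]

lemma sum_copark_restrict (hpriv : IsPrivate C j x) (hfin : ∀ i, (C i).Finite) (r' : ℕ)
    (hP : {a : ι → ℕ | IsCoparking C a}.Finite)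
    (hP' : {b : {i : ι // i ≠ j} → ℕ |
      IsCoparking (fun i : {i : ι // i ≠ j} => C i) b}.Finite) :
    ∑ a ∈ hP.toFinset.filter (fun a => a j = 0), (X : Polynomial ℤ) ^ (r' - ∑ i, a i)
      = ∑ b ∈ hP'.toFinset, (X : Polynomial ℤ) ^ (r' - ∑ i, b i) := by
  classical
  apply Finset.sum_bij (fun a _ => fun i : {i : ι // i ≠ j} => a i.1)
  · intro a ha
    rw [Finset.mem_filter, Set.Finite.mem_toFinset] at ha
    rw [Set.Finite.mem_toFinset]
    exact (copark_zero_iff hpriv hfin ha.2).1 ha.1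
  · intro a1 h1 a2 h2 heq
    rw [Finset.mem_filter, Set.Finite.mem_toFinset] at h1 h2
    funext i
    rcases eq_or_ne i j with rfl | hne
    · rw [h1.2, h2.2]
    · exact congrFun heq ⟨i, hne⟩
  · intro b hb
    rw [Set.Finite.mem_toFinset] at hb
    set a : ι → ℕ := fun i => if h : i = j then 0 else b ⟨i, h⟩ with hadef
    have hrestrict : (fun i : {i : ι // i ≠ j} => a i.1) = b := by
      funext i
      rw [hadef]
      simp only []
      rw [dif_neg i.2]
    have haj : a j = 0 := by simp [hadef]
    refine ⟨a, ?_, hrestrict⟩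
    rw [Finset.mem_filter, Set.Finite.mem_toFinset]
    refine ⟨(copark_zero_iff hpriv hfin haj).2 ?_, haj⟩
    rw [hrestrict]
    exact hb
  · intro a ha
    rw [Finset.mem_filter, Set.Finite.mem_toFinset] at ha
    congr 1
    have h1 : ∑ i, a i = ∑ i ∈ Finset.univ.erase j, a i := by
      rw [← Finset.sum_erase_add Finset.univ a (Finset.mem_univ j), ha.2, add_zero]
    rw [h1, Finset.sum_subtype (p := fun i : ι => i ≠ j) (Finset.univ.erase j)
      (fun i => by simp [Finset.mem_erase]) a]

lemma sum_copark_shift (hpriv : IsPrivate C j x) (hfin : ∀ i, (C i).Finite) (r' : ℕ)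
    (hP : {a : ι → ℕ | IsCoparking C a}.Finite)
    (hP' : {b : ι → ℕ | IsCoparking (fun i => C i \ {x}) b}.Finite) :
    ∑ a ∈ hP.toFinset.filter (fun a => ¬ a j = 0), (X : Polynomial ℤ) ^ (r' + 1 - ∑ i, a i)
      = ∑ b ∈ hP'.toFinset, (X : Polynomial ℤ) ^ (r' - ∑ i, b i) := by
  classical
  apply Finset.sum_bij (fun a _ => Function.update a j (a j - 1))
  · intro a ha
    rw [Finset.mem_filter, Set.Finite.mem_toFinset] at ha
    rw [Set.Finite.mem_toFinset]
    exact (copark_shift_iff hpriv hfin (by omega)).1 ha.1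
  · intro a1 h1 a2 h2 heq
    rw [Finset.mem_filter, Set.Finite.mem_toFinset] at h1 h2
    funext i
    rcases eq_or_ne i j with rfl | hne
    · have e1 := congrFun heq i
      rw [Function.update_self, Function.update_self] at e1
      omega
    · have e1 := congrFun heq i
      rwa [Function.update_of_ne hne, Function.update_of_ne hne] at e1
  · intro b hb
    rw [Set.Finite.mem_toFinset] at hb
    refine ⟨Function.update b j (b j + 1), ?_, ?_⟩
    · rw [Finset.mem_filter, Set.Finite.mem_toFinset]
      constructor
      · have hself : Function.update (Function.update b j (b j + 1)) j
            (Function.update b j (b j + 1) j - 1) = b := by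
          funext i
          rcases eq_or_ne i j with rfl | hne
          · simp
          · simp [Function.update_of_ne hne]
        rw [Set.mem_setOf_eq, copark_shift_iff hpriv hfin (by simp), hself]
        exact hb
      · simp
    · funext i
      rcases eq_or_ne i j with rfl | hne
      · simp
      · simp [Function.update_of_ne hne]
  · intro a ha
    rw [Finset.mem_filter, Set.Finite.mem_toFinset] at ha
    congr 1
    have e1 : a j + ∑ i ∈ Finset.univ.erase j, a i = ∑ i, a i :=
      Finset.add_sum_erase Finset.univ a (Finset.mem_univ j)
    have e2 : ∑ i, Function.update a j (a j - 1) i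
        = (a j - 1) + ∑ i ∈ Finset.univ.erase j, a i := by
      rw [Finset.sum_update_of_mem (Finset.mem_univ j), ← Finset.erase_eq]
    rw [e2]
    have haj : 1 ≤ a j := by omega
    omega

end Sums

/-! ### The main induction -/

section Main

open Polynomial

theorem copark_sum_eq_hsum {α : Type*} :
    ∀ (n : ℕ) (M : Matroid α) (hE : M.E.Finite), M.E.ncard = n →
    ∀ {ι : Type} [Fintype ι] (C : ι → Set α), M.IsCycleSystem C →
    (∑ᶠ a ∈ {a : ι → ℕ | IsCoparking C a}, (X : Polynomial ℤ) ^ (M.rkNat - ∑ i, a i))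
      = ∑ᶠ I ∈ {I : Set α | M.Indep I}, ((X : Polynomial ℤ) - 1) ^ (M.rkNat - I.ncard) := by
  intro n
  induction n using Nat.strong_induction_on with
  | _ n IH =>
  intro M hE hn ι inst C hCS
  classical
  have hCfin : ∀ i, (C i).Finite := fun i => hE.subset (hCS.subset_ground' i)
  have hPfin : {a : ι → ℕ | IsCoparking C a}.Finite := copark_finite C hCfin
  have hIfin : {I : Set α | M.Indep I}.Finite :=
    hE.finite_subsets.subset fun I hI => hI.subset_ground
  rw [finsum_mem_finite_eq_sum hPfin, finsum_mem_finite_eq_sum hIfin]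
  cases isEmpty_or_nonempty ι with
  | inl hempty =>
    have hcard0 : Fintype.card ι = 0 := Fintype.card_eq_zero
    have hrk_le := M.rkNat_le_ncard_ground hE
    have hrkE : M.rkNat = M.E.ncard := by
      have := hCS.1
      omega
    obtain ⟨B, hB⟩ := M.exists_isBase
    have hBE : B = M.E := by
      refine Set.eq_of_subset_of_ncard_le hB.subset_ground ?_ hE
      rw [← rkNat_eq_ncard_base hB, hrkE]
    have hindep : ∀ I : Set α, M.Indep I ↔ I ⊆ M.E := fun I =>
      ⟨fun h => h.subset_ground, fun hIE => (hBE ▸ hB.indep).subset hIE⟩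
    have hsubs : {I : Set α | I ⊆ M.E}.Finite := hE.finite_subsets
    have hRHS : ∑ I ∈ hIfin.toFinset, ((X : Polynomial ℤ) - 1) ^ (M.rkNat - I.ncard)
        = X ^ M.E.ncard := by
      rw [← sum_subsets_pow_set hE hsubs]
      refine Finset.sum_congr ?_ fun I _ => by rw [hrkE]
      ext I
      rw [Set.Finite.mem_toFinset, Set.Finite.mem_toFinset]
      exact hindep I
    rw [hRHS]
    have hone : hPfin.toFinset = {fun _ => 0} := by
      ext a
      rw [Set.Finite.mem_toFinset]
      simp only [Finset.mem_singleton, Set.mem_setOf_eq]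
      constructor
      · intro _
        funext i
        exact isEmptyElim i
      · rintro rfl σ hσ
        obtain ⟨i, -⟩ := hσ
        exact isEmptyElim i
    rw [hone, Finset.sum_singleton]
    have hzero : (∑ i : ι, (fun _ : ι => (0 : ℕ)) i) = 0 := by simp
    rw [hzero, Nat.sub_zero, hrkE]
  | inr hne =>
    have hn1 : 1 ≤ Fintype.card ι := Fintype.card_pos_iff.2 hne
    have huniv : (Finset.univ : Finset ι).Nonempty := Finset.univ_nonempty
    have hr_le := M.rkNat_le_ncard_ground hE
    have hE1 : 1 ≤ M.E.ncard := by
      have := hCS.1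
      omega
    have hnpos : 1 ≤ n := by omega
    by_cases hxnl : ∃ x ∈ uniqueUnion C Finset.univ, M.Indep {x}
    · -- Case A : a non-loop private element exists
      obtain ⟨x, hxuu, hxind⟩ := hxnl
      obtain ⟨j, hpriv⟩ := private_of_mem_uu_univ hxuu
      have hxE : x ∈ M.E := hCS.subset_ground' j hpriv.1
      set M₁ := M ↾ (M.E \ {x}) with hM₁
      obtain ⟨B₀, hB₀, hxB₀⟩ := hCS.exists_base_not_mem hpriv.1
      have hrk₁ : M₁.rkNat = M.rkNat :=
        rkNat_restrict_eq hB₀ (subset_diff_singleton hB₀.subset_ground hxB₀) diff_subset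
      have hCS₁ := hCS.delete_private hE hpriv
      set N := M.conElem x hxind hE with hN
      have hrkN : N.rkNat + 1 = M.rkNat := conElem_rkNat hxind hE
      have hCS₂ : N.IsCycleSystem (fun i => C i \ {x}) := by
        refine ⟨?_, fun i => conElem_cycle hxind hE (hCS.2.1 i), ?_⟩
        · rw [conElem_ground, Set.ncard_diff_singleton_of_mem hxE]
          have := hCS.1
          omega
        · intro σ hσ
          rw [uniqueUnion_diff_singleton]
          exact conElem_dep hxind hE (hCS.2.2 σ hσ)
      have hE₁fin : M₁.E.Finite := hE.diff
      have hNfin : N.E.Finite := hE.diff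
      have hn₁ : M₁.E.ncard = n - 1 := by
        rw [hM₁, restrict_ground_eq, Set.ncard_diff_singleton_of_mem hxE, hn]
      have hnN : N.E.ncard = n - 1 := by
        rw [hN, conElem_ground, Set.ncard_diff_singleton_of_mem hxE, hn]
      have IH₁ := IH (n-1) (by omega) M₁ hE₁fin hn₁
        (fun i : {i : ι // i ≠ j} => C i) hCS₁
      have IH₂ := IH (n-1) (by omega) N hNfin hnN (fun i => C i \ {x}) hCS₂
      have hP₁fin : {b : {i : ι // i ≠ j} → ℕ |
          IsCoparking (fun i : {i : ι // i ≠ j} => C i) b}.Finite :=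
        copark_finite _ (fun i => hCfin i)
      have hI₁fin : {I : Set α | M₁.Indep I}.Finite :=
        hE₁fin.finite_subsets.subset fun I hI => hI.subset_ground
      have hP₂fin : {b : ι → ℕ | IsCoparking (fun i => C i \ {x}) b}.Finite :=
        copark_finite _ (fun i => (hCfin i).diff)
      have hI₂fin : {I : Set α | N.Indep I}.Finite :=
        hNfin.finite_subsets.subset fun I hI => hI.subset_ground
      rw [finsum_mem_finite_eq_sum hP₁fin, finsum_mem_finite_eq_sum hI₁fin, hrk₁] at IH₁
      rw [finsum_mem_finite_eq_sum hP₂fin, finsum_mem_finite_eq_sum hI₂fin] at IH₂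
      -- split both sums
      rw [← Finset.sum_filter_add_sum_filter_not hPfin.toFinset (fun a => a j = 0),
        ← Finset.sum_filter_add_sum_filter_not hIfin.toFinset (fun I => x ∉ I)]
      have hdelsets : hI₁fin.toFinset = hIfin.toFinset.filter (fun I => x ∉ I) := by
        ext I
        rw [Set.Finite.mem_toFinset, Finset.mem_filter, Set.Finite.mem_toFinset]
        simp only [Set.mem_setOf_eq, hM₁, restrict_indep_iff]
        constructor
        · rintro ⟨h1, h2⟩
          exact ⟨h1, fun hmem => (h2 hmem).2 rfl⟩
        · rintro ⟨h1, h2⟩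
          exact ⟨h1, subset_diff_singleton h1.subset_ground h2⟩
      have eqdel : ∑ a ∈ hPfin.toFinset.filter (fun a => a j = 0),
          (X : Polynomial ℤ) ^ (M.rkNat - ∑ i, a i)
          = ∑ I ∈ hIfin.toFinset.filter (fun I => x ∉ I),
            ((X : Polynomial ℤ) - 1) ^ (M.rkNat - I.ncard) := by
        rw [sum_copark_restrict hpriv hCfin M.rkNat hPfin hP₁fin, IH₁, hdelsets]
      have eqRHScon : ∑ J ∈ hI₂fin.toFinset, ((X : Polynomial ℤ) - 1) ^ (N.rkNat - J.ncard)
          = ∑ I ∈ hIfin.toFinset.filter (fun I => ¬ x ∉ I),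
            ((X : Polynomial ℤ) - 1) ^ (M.rkNat - I.ncard) := by
        apply Finset.sum_bij (fun J _ => insert x J)
        · intro J hJ
          rw [Set.Finite.mem_toFinset] at hJ
          rw [Finset.mem_filter, Set.Finite.mem_toFinset]
          rw [Set.mem_setOf_eq, hN, conElem_indep_iff] at hJ
          exact ⟨hJ.2, fun h => h (Set.mem_insert x J)⟩
        · intro J1 h1 J2 h2 heq
          rw [Set.Finite.mem_toFinset, Set.mem_setOf_eq, hN, conElem_indep_iff] at h1 h2
          have hx1 : x ∉ J1 := fun h => (h1.1 h).2 rfl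
          have hx2 : x ∉ J2 := fun h => (h2.1 h).2 rfl
          rw [← Set.insert_diff_self_of_notMem hx1, ← Set.insert_diff_self_of_notMem hx2,
            heq]
        · intro I hI
          rw [Finset.mem_filter, Set.Finite.mem_toFinset, Set.mem_setOf_eq] at hI
          have hxI : x ∈ I := not_not.1 hI.2
          refine ⟨I \ {x}, ?_, ?_⟩
          · rw [Set.Finite.mem_toFinset, Set.mem_setOf_eq, hN, conElem_indep_iff]
            refine ⟨diff_subset_diff_left hI.1.subset_ground, ?_⟩
            rw [Set.insert_diff_singleton, Set.insert_eq_of_mem hxI]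
            exact hI.1
          · rw [Set.insert_diff_singleton, Set.insert_eq_of_mem hxI]
        · intro J hJ
          rw [Set.Finite.mem_toFinset, Set.mem_setOf_eq, hN, conElem_indep_iff] at hJ
          have hxJ : x ∉ J := fun h => (hJ.1 h).2 rfl
          have hJfin : J.Finite := hE.subset (hJ.2.subset_ground.trans ?_) |>.subset
              (Set.subset_insert x J)
          · have hcard : (insert x J).ncard = J.ncard + 1 :=
              Set.ncard_insert_of_notMem hxJ hJfin
            congr 1
            omega
          · exact subset_rfl
      have eqcon : ∑ a ∈ hPfin.toFinset.filter (fun a => ¬ a j = 0),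
          (X : Polynomial ℤ) ^ (M.rkNat - ∑ i, a i)
          = ∑ I ∈ hIfin.toFinset.filter (fun I => ¬ x ∉ I),
            ((X : Polynomial ℤ) - 1) ^ (M.rkNat - I.ncard) := by
        have hstep : ∑ a ∈ hPfin.toFinset.filter (fun a => ¬ a j = 0),
            (X : Polynomial ℤ) ^ (M.rkNat - ∑ i, a i)
            = ∑ a ∈ hPfin.toFinset.filter (fun a => ¬ a j = 0),
              (X : Polynomial ℤ) ^ (N.rkNat + 1 - ∑ i, a i) := by
          refine Finset.sum_congr rfl fun a _ => ?_
          rw [hrkN]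
        rw [hstep, sum_copark_shift hpriv hCfin N.rkNat hPfin hP₂fin, IH₂, eqRHScon]
      rw [eqdel, eqcon]
    · -- Case B : every private element is a loop
      push_neg at hxnl
      obtain ⟨e, heuu⟩ := (hCS.2.2 Finset.univ huniv).nonempty
      have heE : e ∈ M.E := uu_subset_ground hCS Finset.univ heuu
      have hedep : M.Dep {e} := ⟨hxnl e heuu, Set.singleton_subset_iff.2 heE⟩
      obtain ⟨j, hpriv⟩ := private_of_mem_uu_univ heuu
      obtain ⟨σ₀, hjσ₀, hσ₀⟩ := exists_uu_singleton_of_loop (Fintype.card ι) M hE C j e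
        rfl hCS hedep hpriv
      set M₁ := M ↾ (M.E \ {e}) with hM₁
      obtain ⟨B₀, hB₀, heB₀⟩ := hCS.exists_base_not_mem hpriv.1
      have hrk₁ : M₁.rkNat = M.rkNat :=
        rkNat_restrict_eq hB₀ (subset_diff_singleton hB₀.subset_ground heB₀) diff_subset
      have hCS₁ := hCS.delete_private hE hpriv
      have hE₁fin : M₁.E.Finite := hE.diff
      have hn₁ : M₁.E.ncard = n - 1 := by
        rw [hM₁, restrict_ground_eq, Set.ncard_diff_singleton_of_mem heE, hn]
      have IH₁ := IH (n-1) (by omega) M₁ hE₁fin hn₁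
        (fun i : {i : ι // i ≠ j} => C i) hCS₁
      have hP₁fin : {b : {i : ι // i ≠ j} → ℕ |
          IsCoparking (fun i : {i : ι // i ≠ j} => C i) b}.Finite :=
        copark_finite _ (fun i => hCfin i)
      have hI₁fin : {I : Set α | M₁.Indep I}.Finite :=
        hE₁fin.finite_subsets.subset fun I hI => hI.subset_ground
      rw [finsum_mem_finite_eq_sum hP₁fin, finsum_mem_finite_eq_sum hI₁fin, hrk₁] at IH₁
      have hfilter : hPfin.toFinset.filter (fun a => a j = 0) = hPfin.toFinset := by
        refine Finset.filter_true_of_mem fun a ha => ?_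
        rw [Set.Finite.mem_toFinset] at ha
        exact copark_loop_zero hσ₀ hjσ₀ hpriv ha
      have hsets : hI₁fin.toFinset = hIfin.toFinset := by
        ext I
        rw [Set.Finite.mem_toFinset, Set.Finite.mem_toFinset]
        simp only [Set.mem_setOf_eq, hM₁, restrict_indep_iff]
        constructor
        · rintro ⟨h1, -⟩
          exact h1
        · intro h1
          exact ⟨h1, subset_diff_singleton h1.subset_ground (h1.not_mem_of_loop hedep)⟩
      rw [← hfilter, sum_copark_restrict hpriv hCfin M.rkNat hPfin hP₁fin, IH₁, hsets]

end Main

open Polynomial in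
/-- the degree generating polynomial of the coparking functions equals
`∑_I (X - 1)^(r - |I|)` over independent sets `I`, i.e. the `h`-polynomial of `M`. -/
theorem statement_17 {α : Type*} {g : ℕ} (M : Matroid α) (hE : M.E.Finite)
    (C : Fin g → Set α) (hCS : M.IsCycleSystem C) :
    ∑ᶠ a ∈ {a : Fin g → ℕ | IsCoparking C a},
        (X : Polynomial ℤ) ^ (M.rkNat - ∑ i, a i)
      = ∑ᶠ I ∈ {I : Set α | M.Indep I},
          ((X : Polynomial ℤ) - 1) ^ (M.rkNat - I.ncard) :=
  copark_sum_eq_hsum M.E.ncard M hE rfl C hCS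
end
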